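/- arXiv:1210.8316 — 13 statements merged into one kernel-verified Lean document; each statement's English description precedes it below -/
import Mathlib

section
/- Let F be the field of real or complex numbers, let d ≥ 1 and let m : Fin d → ℕ with m i ≥ 1. Let x i ∈ F^{m i} be nonzero vectors and y i ∈ F^{m i} arbitrary vectors, for i ∈ Fin d. Then there exists a d-mode tensor T : (Π i : Fin d, Fin (m i)) → F such that for every i the mode-i contraction of T against (x j)_{j ≠ i} equals y i, if and only if the compatibility conditions hold: (x i)ᵀ(y i) = (x i')ᵀ(y i') for all i, i' ∈ Fin d. -/
/-- The mode-`i` contraction of a `d`-mode tensor `T` against the vectors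
`(x j)_{j ≠ i}`: its `k`-th entry is the sum over all multi-indices `idx` with
`idx i = k` of `T idx * ∏_{j ≠ i} (x j) (idx j)`. -/
def modeContract {F : Type*} [Field F] {d : ℕ} {m : Fin d → ℕ}
    (T : (∀ i, Fin (m i)) → F) (x : ∀ j, Fin (m j) → F) (i : Fin d) :
    Fin (m i) → F :=
  fun k => ∑ idx : ∀ j, Fin (m j),
    if idx i = k then T idx * ∏ j ∈ Finset.univ.erase i, x j (idx j) else 0

lemma key_sum {F : Type*} [Field F] {d : ℕ} {m : Fin d → ℕ}
    (g : ∀ j, Fin (m j) → F) (i : Fin d) (k : Fin (m i)) :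
    ∑ idx : ∀ j, Fin (m j),
      (if idx i = k then ∏ j ∈ Finset.univ.erase i, g j (idx j) else 0) =
    ∏ j ∈ Finset.univ.erase i, ∑ l, g j l := by
  classical
  set h : ∀ j, Fin (m j) → F :=
    Function.update g i (fun l => if l = k then 1 else 0) with hh
  have step : ∀ idx : ∀ j, Fin (m j),
      (if idx i = k then ∏ j ∈ Finset.univ.erase i, g j (idx j) else 0) =
      ∏ j, h j (idx j) := by
    intro idx
    rw [← Finset.mul_prod_erase Finset.univ (fun j => h j (idx j)) (Finset.mem_univ i)]
    have h1 : h i (idx i) = if idx i = k then 1 else 0 := by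
      simp [hh, Function.update_self]
    have h2 : ∏ j ∈ Finset.univ.erase i, h j (idx j)
        = ∏ j ∈ Finset.univ.erase i, g j (idx j) := by
      refine Finset.prod_congr rfl fun j hj => ?_
      have hji : j ≠ i := (Finset.mem_erase.mp hj).1
      simp [hh, Function.update_of_ne hji]
    rw [h1, h2]
    split_ifs <;> simp
  rw [Finset.sum_congr rfl (fun idx _ => step idx), ← Fintype.prod_sum h]
  rw [← Finset.mul_prod_erase Finset.univ (fun j => ∑ l, h j l) (Finset.mem_univ i)]
  have h1 : ∑ l, h i l = 1 := by simp [hh, Function.update_self]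
  have h2 : ∏ j ∈ Finset.univ.erase i, ∑ l, h j l
      = ∏ j ∈ Finset.univ.erase i, ∑ l, g j l := by
    refine Finset.prod_congr rfl fun j hj => ?_
    have hji : j ≠ i := (Finset.mem_erase.mp hj).1
    simp [hh, Function.update_of_ne hji]
  rw [h1, h2, one_mul]

lemma contract_pure {F : Type*} [Field F] {d : ℕ} {m : Fin d → ℕ}
    (w x : ∀ j, Fin (m j) → F) (i : Fin d) (k : Fin (m i)) :
    modeContract (fun idx => ∏ j, w j (idx j)) x i k =
      w i k * ∏ j ∈ Finset.univ.erase i, ∑ l, x j l * w j l := by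
  classical
  unfold modeContract
  have step : ∀ idx : ∀ j, Fin (m j),
      (if idx i = k then (∏ j, w j (idx j)) * ∏ j ∈ Finset.univ.erase i, x j (idx j) else 0) =
      w i k * (if idx i = k then
        ∏ j ∈ Finset.univ.erase i, (x j (idx j) * w j (idx j)) else 0) := by
    intro idx
    split_ifs with hcond
    · rw [← Finset.mul_prod_erase Finset.univ (fun j => w j (idx j)) (Finset.mem_univ i),
        hcond, Finset.prod_mul_distrib]
      ring
    · ring
  rw [Finset.sum_congr rfl (fun idx _ => step idx), ← Finset.mul_sum,
    key_sum (fun j l => x j l * w j l) i k]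

lemma contract_sum {F : Type*} [Field F] {d : ℕ} {m : Fin d → ℕ} {ι : Type*} [Fintype ι]
    (A : ι → ((∀ j, Fin (m j)) → F)) (x : ∀ j, Fin (m j) → F) (i : Fin d) (k : Fin (m i)) :
    modeContract (fun idx => ∑ p, A p idx) x i k = ∑ p, modeContract (A p) x i k := by
  classical
  unfold modeContract
  rw [Finset.sum_comm]
  refine Finset.sum_congr rfl fun idx _ => ?_
  rw [Finset.sum_mul]
  split_ifs with hcond
  · simp
  · simp

/-- There exists a tensor `T` whose mode-`i` contraction against `(x j)_{j ≠ i}`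
equals `y i` for every `i`, if and only if the compatibility conditions
`xᵢᵀyᵢ = xᵢ'ᵀyᵢ'` hold. -/
theorem exists_tensor_with_contractions_iff
    {F : Type*} [RCLike F] {d : ℕ} (hd : 1 ≤ d) (m : Fin d → ℕ)
    (hm : ∀ i, 1 ≤ m i) (x y : ∀ i, Fin (m i) → F) (hx : ∀ i, x i ≠ 0) :
    (∃ T : (∀ i, Fin (m i)) → F, ∀ i, modeContract T x i = y i) ↔
      ∀ i i' : Fin d, ∑ k, x i k * y i k = ∑ k, x i' k * y i' k := by
  classical
  constructor
  · rintro ⟨T, hT⟩ i i'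
    have key : ∀ i : Fin d, ∑ k, x i k * modeContract T x i k
        = ∑ idx : ∀ j, Fin (m j), T idx * ∏ j, x j (idx j) := by
      intro i
      unfold modeContract
      simp only [Finset.mul_sum]
      rw [Finset.sum_comm]
      refine Finset.sum_congr rfl fun idx _ => ?_
      simp only [mul_ite, mul_zero]
      rw [Finset.sum_ite_eq (Finset.univ) (idx i)
        (fun k => x i k * (T idx * ∏ j ∈ Finset.univ.erase i, x j (idx j)))]
      rw [← Finset.mul_prod_erase Finset.univ (fun j => x j (idx j)) (Finset.mem_univ i)]
      simp; ring
    rw [← hT i, ← hT i', key i, key i']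
  · intro hc
    -- choose u i with ⟨x i, u i⟩ = 1
    have hu : ∀ i : Fin d, ∃ u : Fin (m i) → F, ∑ l, x i l * u l = 1 := by
      intro i
      obtain ⟨l0, hl0⟩ := Function.ne_iff.mp (hx i)
      refine ⟨fun l => if l = l0 then (x i l0)⁻¹ else 0, ?_⟩
      simp only [mul_ite, mul_zero]
      rw [Finset.sum_ite_eq' Finset.univ l0 (fun l => x i l * (x i l0)⁻¹)]
      simp [mul_inv_cancel₀ (by simpa using hl0)]
    choose u hu using hu
    set i0 : Fin d := ⟨0, hd⟩ with hi0
    set c : F := ∑ k, x i0 k * y i0 k with hc0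
    have hcc : ∀ i, ∑ k, x i k * y i k = c := fun i => hc i i0
    have hdF : (d : F) ≠ 0 := Nat.cast_ne_zero.mpr (by omega)
    set a : F := ((d : F) - 1) * c / d with ha
    set w : ∀ p : Fin d, ∀ j, Fin (m j) → F :=
      fun p => Function.update u p (fun l => y p l - a * u p l) with hw
    refine ⟨fun idx => ∑ p, ∏ j, w p j (idx j), ?_⟩
    intro i
    funext k
    rw [contract_sum (fun p => fun idx => ∏ j, w p j (idx j)) x i k]
    have hterm : ∀ p : Fin d, modeContract (fun idx => ∏ j, w p j (idx j)) x i k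
        = if p = i then y i k - a * u i k else u i k * (c - a) := by
      intro p
      rw [contract_pure]
      split_ifs with hpi
      · subst hpi
        have : ∏ j ∈ Finset.univ.erase p, ∑ l, x j l * w p j l = 1 := by
          refine Finset.prod_eq_one fun j hj => ?_
          have hji : j ≠ p := (Finset.mem_erase.mp hj).1
          simp [hw, Function.update_of_ne hji, hu]
        rw [this, mul_one]
        simp [hw, Function.update_self]
      · have hwi : w p i k = u i k := by simp [hw, Function.update_of_ne (Ne.symm hpi)]
        have hprod : ∏ j ∈ Finset.univ.erase i, ∑ l, x j l * w p j l = c - a := by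
          rw [Finset.prod_eq_single_of_mem p
            (Finset.mem_erase.mpr ⟨hpi, Finset.mem_univ p⟩)]
          · have : ∑ l, x p l * w p p l = c - a := by
              simp only [hw, Function.update_self, mul_sub]
              rw [Finset.sum_sub_distrib]
              have h2 : ∑ l, x p l * (a * u p l) = a := by
                have : ∀ l, x p l * (a * u p l) = a * (x p l * u p l) := fun l => by ring
                rw [Finset.sum_congr rfl fun l _ => this l, ← Finset.mul_sum, hu, mul_one]
              rw [hcc p, h2]
            exact this
          · intro j hj hjp
            have hji : j ≠ p := hjp
            simp [hw, Function.update_of_ne hji, hu]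
        rw [hwi, hprod]
    rw [Finset.sum_congr rfl fun p _ => hterm p]
    rw [← Finset.add_sum_erase Finset.univ _ (Finset.mem_univ i)]
    have h1 : (if i = i then y i k - a * u i k else u i k * (c - a)) = y i k - a * u i k := by
      simp
    have h2 : ∑ p ∈ Finset.univ.erase i,
        (if p = i then y i k - a * u i k else u i k * (c - a))
        = ((d - 1 : ℕ) : F) * (u i k * (c - a)) := by
      rw [Finset.sum_congr rfl fun p hp => if_neg ((Finset.mem_erase.mp hp).1),
        Finset.sum_const, Finset.card_erase_of_mem (Finset.mem_univ i)]
      simp [nsmul_eq_mul]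
    rw [h1, h2, Nat.cast_sub hd, Nat.cast_one, ha]
    field_simp
    ring
end

section
/- Let F be the field of real or complex numbers, let d ≥ 1 and let m : Fin d → ℕ with m i ≥ 1. Let x i ∈ F^{m i} be nonzero vectors and y i ∈ F^{m i} arbitrary vectors, for i ∈ Fin d. Then there exist a d-mode tensor T : (Π i : Fin d, Fin (m i)) → F and scalars t : Fin d → F such that for every i the mode-i contraction of T against (x j)_{j ≠ i} equals y i + t i • x i, if and only if (x i)ᵀ(y i) = (x i')ᵀ(y i') for every pair of indices i, i' such that both x i and x i' are isotropic. (In particular, if at most one of the x i is isotropic, such T always exists.) -/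
-- fiber sum lemma
lemma sum_fiber_eq {F : Type*} [AddCommMonoid F] {d : ℕ} {m : Fin d → ℕ}
    (i : Fin d) (k : Fin (m i)) (f : (∀ j, Fin (m j)) → F) :
    (∑ idx : ∀ j, Fin (m j), if idx i = k then f idx else 0)
      = ∑ g : ∀ j : {j // j ≠ i}, Fin (m (j : Fin d)),
          f ((Equiv.piSplitAt i fun j => Fin (m j)).symm (k, g)) := by
  rw [← Equiv.sum_comp (Equiv.piSplitAt i fun j => Fin (m j)).symm
    (fun idx => if idx i = k then f idx else 0)]
  rw [Fintype.sum_prod_type]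
  rw [Finset.sum_eq_single k]
  · simp
  · intro a _ ha
    simp [ha]
  · simp

-- full contraction
lemma dot_modeContract' {F : Type*} [Field F] {d : ℕ} {m : Fin d → ℕ}
    (T : (∀ i, Fin (m i)) → F) (x : ∀ j, Fin (m j) → F) (i : Fin d) :
    (∑ k, x i k * (∑ idx : ∀ j, Fin (m j),
      if idx i = k then T idx * ∏ j ∈ Finset.univ.erase i, x j (idx j) else 0))
      = ∑ idx : ∀ j, Fin (m j), T idx * ∏ j, x j (idx j) := by
  simp only [Finset.mul_sum, mul_ite, mul_zero]
  rw [Finset.sum_comm]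
  refine Finset.sum_congr rfl fun idx _ => ?_
  rw [Finset.sum_eq_single (idx i)]
  · rw [if_pos rfl, ← mul_assoc, mul_comm (x i (idx i)) (T idx), mul_assoc]
    congr 1
    exact Finset.mul_prod_erase Finset.univ (fun j => x j (idx j)) (Finset.mem_univ i)
  · intro b _ hb; simp [Ne.symm hb]
  · simp

lemma rankOne_contract {F : Type*} [Field F] {d : ℕ} {m : Fin d → ℕ}
    (x v : ∀ j, Fin (m j) → F) (i : Fin d) (k : Fin (m i)) :
    (∑ idx : ∀ j, Fin (m j), if idx i = k then
        (∏ j, v j (idx j)) * ∏ j ∈ Finset.univ.erase i, x j (idx j) else 0)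
      = v i k * ∏ j ∈ Finset.univ.erase i, (∑ l, x j l * v j l) := by
  rw [sum_fiber_eq]
  set e := (Equiv.piSplitAt i fun j => Fin (m j)).symm with he
  have h1 : ∀ g, e (k, g) i = k := by intro g; simp [he]
  have h2 : ∀ g (j : {j // j ≠ i}), e (k, g) (j : Fin d) = g j := by
    intro g j; simp [he, j.2]
  have key : ∀ g : ∀ j : {j // j ≠ i}, Fin (m (j : Fin d)),
      (∏ j, v j (e (k, g) j)) * ∏ j ∈ Finset.univ.erase i, x j (e (k, g) j)
        = v i k * ∏ j : {j // j ≠ i}, (x (j : Fin d) (g j) * v (j : Fin d) (g j)) := by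
    intro g
    rw [← Finset.mul_prod_erase Finset.univ (fun j => v j (e (k, g) j)) (Finset.mem_univ i), h1]
    rw [Finset.prod_subtype (p := fun j => j ≠ i) (Finset.univ.erase i) (by simp) (fun j => v j (e (k, g) j)),
        Finset.prod_subtype (p := fun j => j ≠ i) (Finset.univ.erase i) (by simp) (fun j => x j (e (k, g) j))]
    rw [mul_assoc, ← Finset.prod_mul_distrib]
    congr 1
    refine Finset.prod_congr rfl fun j _ => ?_
    rw [h2]
    exact mul_comm _ _
  simp only [key]
  rw [← Finset.mul_sum]
  congr 1
  rw [Finset.prod_subtype (p := fun j => j ≠ i) (Finset.univ.erase i) (by simp) (fun j => ∑ l, x j l * v j l)]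
  exact (Fintype.prod_sum (fun (j : {j // j ≠ i}) (l : Fin (m (j : Fin d))) => x (j : Fin d) l * v (j : Fin d) l)).symm

lemma dot_modeContract {F : Type*} [Field F] {d : ℕ} {m : Fin d → ℕ}
    (T : (∀ i, Fin (m i)) → F) (x : ∀ j, Fin (m j) → F) (i : Fin d) :
    (∑ k, x i k * modeContract T x i k)
      = ∑ idx : ∀ j, Fin (m j), T idx * ∏ j, x j (idx j) :=
  dot_modeContract' T x i

/-- There exist a tensor `T` and scalars `t i` such that the mode-`i` contraction
of `T` equals `y i + t i • x i` for every `i`, if and only if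
`xᵢᵀyᵢ = xᵢ'ᵀyᵢ'` for every pair of indices `i, i'` such that both `x i` and
`x i'` are isotropic. -/
theorem exists_tensor_with_contractions_mod_lines_iff
    {F : Type*} [RCLike F] {d : ℕ} (hd : 1 ≤ d) (m : Fin d → ℕ)
    (hm : ∀ i, 1 ≤ m i) (x y : ∀ i, Fin (m i) → F) (hx : ∀ i, x i ≠ 0) :
    (∃ (T : (∀ i, Fin (m i)) → F) (t : Fin d → F),
        ∀ i, modeContract T x i = y i + t i • x i) ↔
      ∀ i i' : Fin d, (∑ k, x i k * x i k) = 0 → (∑ k, x i' k * x i' k) = 0 →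
        ∑ k, x i k * y i k = ∑ k, x i' k * y i' k := by
  constructor
  · rintro ⟨T, t, hT⟩ i i' hi hi'
    have key : ∀ j, (∑ k, x j k * x j k) = 0 →
        ∑ k, x j k * y j k = ∑ idx : ∀ j, Fin (m j), T idx * ∏ j, x j (idx j) := by
      intro j hj
      rw [← dot_modeContract T x j, hT j]
      simp only [Pi.add_apply, Pi.smul_apply, smul_eq_mul, mul_add]
      rw [Finset.sum_add_distrib]
      have h2 : ∑ k, x j k * (t j * x j k) = t j * ∑ k, x j k * x j k := by
        rw [Finset.mul_sum]; exact Finset.sum_congr rfl fun k _ => by ring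
      rw [h2, hj, mul_zero, add_zero]
    exact (key i hi).trans (key i' hi').symm
  · intro hiso
    classical
    set c : Fin d → F := fun i => ∑ k, x i k * x i k with hc
    set b : Fin d → F := fun i => ∑ k, x i k * y i k with hb
    have hne : ∀ i, ∃ l, x i l ≠ 0 := fun i => by
      by_contra hcon; push_neg at hcon; exact hx i (funext hcon)
    choose l0 hl0 using hne
    set w : ∀ i, Fin (m i) → F := fun i =>
      if c i = 0 then (fun l => if l = l0 i then (x i (l0 i))⁻¹ else 0)
      else (c i)⁻¹ • x i with hwdef
    have hw1 : ∀ i, ∑ l, x i l * w i l = 1 := by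
      intro i
      rw [hwdef]
      by_cases h : c i = 0
      · simp only [if_pos h, mul_ite, mul_zero]
        rw [Finset.sum_ite_eq' Finset.univ (l0 i) (fun l => x i l * (x i (l0 i))⁻¹)]
        simp [mul_inv_cancel₀ (hl0 i)]
      · simp only [if_neg h, Pi.smul_apply, smul_eq_mul]
        have : ∑ l, x i l * ((c i)⁻¹ * x i l) = (c i)⁻¹ * ∑ l, x i l * x i l := by
          rw [Finset.mul_sum]; exact Finset.sum_congr rfl fun l _ => by ring
        rw [this]
        show (c i)⁻¹ * c i = 1
        exact inv_mul_cancel₀ h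
    set β : F := if h : ∃ i, c i = 0 then b h.choose else 0 with hβ
    have hβiso : ∀ i, c i = 0 → b i = β := by
      intro i hi
      have hex : ∃ i, c i = 0 := ⟨i, hi⟩
      rw [hβ, dif_pos hex]
      exact hiso i hex.choose hi hex.choose_spec
    set B : F := ∑ i, b i with hB
    set i0 : Fin d := ⟨0, hd⟩ with hi0
    set α : Fin d → F := fun i => if i = i0 then β - B else 0 with hα
    have hαsum : ∑ i, α i = β - B := by
      rw [hα]
      rw [Finset.sum_ite_eq' Finset.univ i0 (fun _ => β - B)]
      simp
    set z : ∀ i, Fin (m i) → F := fun i l => y i l + α i * w i l with hz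
    set v : Fin d → ∀ j, Fin (m j) → F := fun i' => Function.update w i' (z i') with hv
    have hs : ∀ i', (∑ l, x i' l * z i' l) = b i' + α i' := by
      intro i'
      simp only [hz, mul_add]
      rw [Finset.sum_add_distrib]
      congr 1
      have : ∑ l, x i' l * (α i' * w i' l) = α i' * ∑ l, x i' l * w i' l := by
        rw [Finset.mul_sum]; exact Finset.sum_congr rfl fun l _ => by ring
      rw [this, hw1, mul_one]
    refine ⟨fun idx => ∑ i', ∏ j, v i' j (idx j),
      fun i => if c i = 0 then 0 else (β - b i) * (c i)⁻¹, ?_⟩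
    intro i
    funext k
    have hmc : modeContract (fun idx => ∑ i', ∏ j, v i' j (idx j)) x i k
        = ∑ i', v i' i k * ∏ j ∈ Finset.univ.erase i, (∑ l, x j l * v i' j l) := by
      show (∑ idx : ∀ j, Fin (m j), if idx i = k then
          (∑ i', ∏ j, v i' j (idx j)) * ∏ j ∈ Finset.univ.erase i, x j (idx j) else 0) = _
      calc (∑ idx : ∀ j, Fin (m j), if idx i = k then
            (∑ i', ∏ j, v i' j (idx j)) * ∏ j ∈ Finset.univ.erase i, x j (idx j) else 0)
          = ∑ idx : ∀ j, Fin (m j), ∑ i', if idx i = k then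
            (∏ j, v i' j (idx j)) * ∏ j ∈ Finset.univ.erase i, x j (idx j) else 0 := by
            refine Finset.sum_congr rfl fun idx _ => ?_
            rw [Finset.sum_mul]
            split
            · rfl
            · simp
        _ = ∑ i', ∑ idx : ∀ j, Fin (m j), if idx i = k then
            (∏ j, v i' j (idx j)) * ∏ j ∈ Finset.univ.erase i, x j (idx j) else 0 :=
            Finset.sum_comm
        _ = _ := Finset.sum_congr rfl fun i' _ => rankOne_contract x (v i') i k
    rw [hmc]
    have hD : ∀ i' j, j ≠ i' → (∑ l, x j l * v i' j l) = 1 := by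
      intro i' j hj
      simp only [hv]
      simp only [Function.update_of_ne hj]
      exact hw1 j
    have hterm : ∀ i' ∈ Finset.univ.erase i, v i' i k * ∏ j ∈ Finset.univ.erase i,
        (∑ l, x j l * v i' j l) = w i k * (b i' + α i') := by
      intro i' hi'
      have hii' : i ≠ i' := Ne.symm (Finset.ne_of_mem_erase hi')
      simp only [hv]
      rw [Function.update_of_ne hii']
      congr 1
      rw [Finset.prod_eq_single i']
      · rw [Function.update_self]
        exact hs i'
      · intro j _ hj
        simp only [Function.update_of_ne hj]
        exact hw1 j
      · intro hmem
        exact absurd (Finset.mem_erase.mpr ⟨Ne.symm hii', Finset.mem_univ i'⟩) hmem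
    rw [← Finset.add_sum_erase Finset.univ _ (Finset.mem_univ i)]
    rw [Finset.sum_congr rfl hterm]
    rw [← Finset.mul_sum]
    have hsum_erase : ∑ i' ∈ Finset.univ.erase i, (b i' + α i') = β - (b i + α i) := by
      have h1 : ∑ i' ∈ Finset.univ.erase i, (b i' + α i') =
          (∑ i', (b i' + α i')) - (b i + α i) := by
        rw [← Finset.add_sum_erase Finset.univ _ (Finset.mem_univ i)]
        ring
      rw [h1, Finset.sum_add_distrib, hαsum, ← hB]
      ring
    rw [hsum_erase]
    -- first term: v i i k = z i k
    simp only [hv]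
    rw [Function.update_self]
    have hprod1 : ∏ j ∈ Finset.univ.erase i, (∑ l, x j l * Function.update w i (z i) j l) = 1 := by
      refine Finset.prod_eq_one fun j hj => ?_
      have : j ≠ i := Finset.ne_of_mem_erase hj
      simp only [Function.update_of_ne this]
      exact hw1 j
    rw [hprod1, mul_one]
    -- now : z i k + w i k * (β - (b i + α i)) = (y i + t i • x i) k
    simp only [hz, Pi.add_apply, Pi.smul_apply, smul_eq_mul]
    by_cases hci : c i = 0
    · rw [if_pos hci, hβiso i hci]
      ring
    · rw [if_neg hci]
      have hwi : w i k = (c i)⁻¹ * x i k := by rw [hwdef]; simp [hci]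
      rw [hwi]
      ring
end

section
/- Let d ≥ 1 and m : Fin d → ℕ with m i ≥ 1. Let T : (Π i : Fin d, Fin (m i)) → ℂ be a d-mode complex tensor, let x i ∈ ℂ^{m i} be nonzero vectors and λ i ∈ ℂ scalars such that for every i the mode-i contraction of T against (x j)_{j ≠ i} equals λ i • x i, and assume ∏_{i} λ i ≠ 0. Then either every x i is isotropic, or no x i is isotropic. -/
/-- For a singular vector tuple of a complex tensor corresponding to a nonzero
singular value, either every `x i` is isotropic or no `x i` is isotropic. -/
theorem isotropic_all_or_none_of_singular_tuple
    {d : ℕ} (hd : 1 ≤ d) (m : Fin d → ℕ) (hm : ∀ i, 1 ≤ m i)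
    (T : (∀ i, Fin (m i)) → ℂ) (x : ∀ i, Fin (m i) → ℂ) (lam : Fin d → ℂ)
    (hx : ∀ i, x i ≠ 0)
    (hsing : ∀ i, modeContract T x i = lam i • x i)
    (hnz : ∏ i, lam i ≠ 0) :
    (∀ i, ∑ k, x i k * x i k = 0) ∨ (∀ i, ∑ k, x i k * x i k ≠ 0) := by
  set S : ℂ := ∑ idx : ∀ j, Fin (m j), T idx * ∏ j, x j (idx j) with hS
  have hlam : ∀ i, lam i ≠ 0 := fun i =>
    Finset.prod_ne_zero_iff.mp hnz i (Finset.mem_univ i)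
  have key : ∀ i, lam i * (∑ k, x i k * x i k) = S := by
    intro i
    have h1 : ∑ k, modeContract T x i k * x i k = S := by
      unfold modeContract
      rw [hS]
      simp only [Finset.sum_mul, ite_mul, zero_mul]
      rw [Finset.sum_comm]
      refine Finset.sum_congr rfl fun idx _ => ?_
      rw [Finset.sum_ite_eq Finset.univ (idx i) (fun k => _ * x i k)]
      simp only [Finset.mem_univ, if_true]
      rw [mul_assoc, Finset.prod_erase_mul _ _ (Finset.mem_univ i)]
    rw [← h1, hsing i]
    simp [Finset.mul_sum, mul_assoc]
  by_cases hS0 : S = 0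
  · left
    intro i
    have := key i
    rw [hS0] at this
    exact (mul_eq_zero.mp this).resolve_left (hlam i)
  · right
    intro i h
    apply hS0
    rw [← key i, h, mul_zero]
end

section
/- Let d ≥ 1 and m : Fin d → ℕ with m i ≥ 1. Let T : (Π i : Fin d, Fin (m i)) → ℝ be a d-mode real tensor, let x i ∈ ℝ^{m i} be nonzero vectors and λ i ∈ ℝ scalars such that for every i the mode-i contraction of T against (x j)_{j ≠ i} equals λ i • x i. If λ k = 0 for some k ∈ Fin d, then λ i = 0 for every i ∈ Fin d. -/
lemma modeContract_inner {d : ℕ} {m : Fin d → ℕ}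
    (T : (∀ i, Fin (m i)) → ℝ) (x : ∀ i, Fin (m i) → ℝ) (i : Fin d) :
    ∑ k, modeContract T x i k * x i k
      = ∑ idx : ∀ j, Fin (m j), T idx * ∏ j, x j (idx j) := by
  unfold modeContract
  simp_rw [Finset.sum_mul, ite_mul, zero_mul]
  rw [Finset.sum_comm]
  refine Finset.sum_congr rfl fun idx _ => ?_
  rw [Finset.sum_ite_eq, if_pos (Finset.mem_univ _), mul_assoc,
    Finset.prod_erase_mul _ _ (Finset.mem_univ i)]

/-- For a real singular vector tuple, if one of the singular-value scalars
vanishes then they all vanish. -/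
theorem real_singular_tuple_lambda_all_zero
    {d : ℕ} (hd : 1 ≤ d) (m : Fin d → ℕ) (hm : ∀ i, 1 ≤ m i)
    (T : (∀ i, Fin (m i)) → ℝ) (x : ∀ i, Fin (m i) → ℝ) (lam : Fin d → ℝ)
    (hx : ∀ i, x i ≠ 0)
    (hsing : ∀ i, modeContract T x i = lam i • x i)
    (k : Fin d) (hk : lam k = 0) :
    ∀ i, lam i = 0 := by
  have key : ∀ i, lam i * ∑ a, x i a * x i a
      = ∑ idx : ∀ j, Fin (m j), T idx * ∏ j, x j (idx j) := by
    intro i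
    rw [← modeContract_inner T x i, hsing i, Finset.mul_sum]
    simp [mul_assoc]
  have hS : (∑ idx : ∀ j, Fin (m j), T idx * ∏ j, x j (idx j)) = 0 := by
    rw [← key k, hk, zero_mul]
  intro i
  have h := key i
  rw [hS] at h
  have hxx : (∑ a, x i a * x i a) ≠ 0 := by
    intro h0
    apply hx i
    funext a
    have : ∀ a ∈ Finset.univ, x i a * x i a = 0 := by
      intro a _
      exact (Finset.sum_eq_zero_iff_of_nonneg (fun b _ => mul_self_nonneg _)).mp h0 a (Finset.mem_univ a)
    have := this a (Finset.mem_univ a)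
    exact mul_self_eq_zero.mp this
  exact (mul_eq_zero.mp h).resolve_right hxx
end

section
/- Let d ≥ 3 and 1 ≤ m1 ≤ m2 be integers, and let c denote the coefficient of t1^{m1−1} t2^{m2−1} in the polynomial P = (Σ_{a=0}^{m1−1} ((d−2)·t1 + t2)^{m1−1−a} · t1^a) · (Σ_{b=0}^{m2−1} ((d−1)·t1)^{m2−1−b} · t2^b) in ℤ[t1, t2]. Then (2d−4) · c = (2d−3)^{m1} − 1. -/
open MvPolynomial

namespace CountPartitionAux

open Finset

private lemma pair_eq_iff (p q P Q : ℕ) :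
    Finsupp.single (0 : Fin 2) p + Finsupp.single 1 q =
      Finsupp.single (0 : Fin 2) P + Finsupp.single 1 Q ↔ p = P ∧ q = Q := by
  constructor
  · intro h
    have h0 := DFunLike.congr_fun h 0
    have h1 := DFunLike.congr_fun h 1
    simp [Finsupp.single_apply] at h0 h1
    exact ⟨h0, h1⟩
  · rintro ⟨rfl, rfl⟩; rfl

private lemma pair_le_iff (p q P Q : ℕ) :
    Finsupp.single (0 : Fin 2) p + Finsupp.single 1 q ≤
      Finsupp.single (0 : Fin 2) P + Finsupp.single 1 Q ↔ p ≤ P ∧ q ≤ Q := by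
  rw [Finsupp.le_def]
  constructor
  · intro h
    have h0 := h 0
    have h1 := h 1
    simp [Finsupp.single_apply] at h0 h1
    exact ⟨h0, h1⟩
  · rintro ⟨h0, h1⟩ i
    fin_cases i <;> simp [Finsupp.single_apply, h0, h1]

private lemma pair_sub (p q P Q : ℕ) :
    (Finsupp.single (0 : Fin 2) P + Finsupp.single 1 Q) -
      (Finsupp.single (0 : Fin 2) p + Finsupp.single 1 q) =
      Finsupp.single (0 : Fin 2) (P - p) + Finsupp.single 1 (Q - q) := by
  ext i
  fin_cases i <;> simp [Finsupp.tsub_apply, Finsupp.single_apply]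

private lemma single_le_pair (a P Q : ℕ) :
    Finsupp.single (0 : Fin 2) a ≤ Finsupp.single (0 : Fin 2) P + Finsupp.single 1 Q ↔ a ≤ P := by
  simpa using pair_le_iff a 0 P Q

private lemma pair_sub_single (a P Q : ℕ) :
    (Finsupp.single (0 : Fin 2) P + Finsupp.single 1 Q) - Finsupp.single (0 : Fin 2) a =
      Finsupp.single (0 : Fin 2) (P - a) + Finsupp.single 1 Q := by
  simpa using pair_sub a 0 P Q

private lemma CXX_eq_monomial (r : ℤ) (p q : ℕ) :
    (C r * X (0 : Fin 2) ^ p * X 1 ^ q : MvPolynomial (Fin 2) ℤ) =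
      monomial (Finsupp.single 0 p + Finsupp.single 1 q) r := by
  rw [X_pow_eq_monomial, X_pow_eq_monomial, C_mul_monomial, mul_one, monomial_mul, mul_one]

private lemma coeff_binom_pow (c : ℤ) (m p q : ℕ) :
    coeff (Finsupp.single (0 : Fin 2) p + Finsupp.single 1 q)
      ((C c * X 0 + X 1) ^ m : MvPolynomial (Fin 2) ℤ) =
      if p + q = m then (m.choose q : ℤ) * c ^ p else 0 := by
  rw [add_pow, coeff_sum]
  have hterm : ∀ k ∈ range (m + 1),
      coeff (Finsupp.single (0 : Fin 2) p + Finsupp.single 1 q)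
        ((C c * X (0 : Fin 2)) ^ k * X 1 ^ (m - k) * ((m.choose k : ℕ) : MvPolynomial (Fin 2) ℤ)) =
      if k = p then (if m - k = q then (m.choose k : ℤ) * c ^ p else 0) else 0 := by
    intro k hk
    have : ((C c * X (0 : Fin 2)) ^ k * X 1 ^ (m - k) * ((m.choose k : ℕ) : MvPolynomial (Fin 2) ℤ))
        = monomial (Finsupp.single 0 k + Finsupp.single 1 (m - k)) (c ^ k * (m.choose k : ℤ)) := by
      rw [mul_pow, ← C_pow, CXX_eq_monomial]
      rw [show ((m.choose k : ℕ) : MvPolynomial (Fin 2) ℤ) = C ((m.choose k : ℤ)) by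
        simp]
      rw [mul_comm, C_mul_monomial, mul_comm]
    rw [this, coeff_monomial]
    simp only [pair_eq_iff]
    by_cases h1 : k = p
    · subst h1
      by_cases h2 : m - k = q <;> simp [h2, mul_comm]
    · simp [h1]
  rw [Finset.sum_congr rfl hterm, Finset.sum_ite_eq']
  by_cases hp : p ∈ range (m + 1)
  · rw [if_pos hp]
    have hpm : p ≤ m := by simpa [Nat.lt_succ_iff] using hp
    by_cases hq : m - p = q
    · rw [if_pos hq, if_pos (by omega)]
      congr 2
      rw [← hq, Nat.choose_symm hpm]
    · rw [if_neg hq, if_neg (by omega)]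
  · rw [if_neg hp, if_neg (by simp [Finset.mem_range] at hp; omega)]

private lemma coeff_A (c : ℤ) (n1 j : ℕ) (hj : j ≤ n1) :
    coeff (Finsupp.single (0 : Fin 2) (n1 - j) + Finsupp.single 1 j)
      ((∑ a ∈ range (n1 + 1), (C c * X 0 + X 1) ^ (n1 - a) * X 0 ^ a) :
        MvPolynomial (Fin 2) ℤ) =
      ∑ a ∈ range (n1 + 1 - j), ((n1 - a).choose j : ℤ) * c ^ (n1 - j - a) := by
  rw [coeff_sum]
  have hterm : ∀ a ∈ range (n1 + 1),
      coeff (Finsupp.single (0 : Fin 2) (n1 - j) + Finsupp.single 1 j)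
        ((C c * X (0 : Fin 2) + X 1) ^ (n1 - a) * X 0 ^ a) =
      if a ∈ range (n1 + 1 - j) then ((n1 - a).choose j : ℤ) * c ^ (n1 - j - a) else 0 := by
    intro a ha
    rw [X_pow_eq_monomial, coeff_mul_monomial']
    by_cases hle : a ≤ n1 - j
    · rw [if_pos ((single_le_pair a (n1 - j) j).2 hle), pair_sub_single, coeff_binom_pow,
        if_pos (by omega), if_pos (by simp only [Finset.mem_range]; omega), mul_one]
    · rw [if_neg (fun h => hle ((single_le_pair a (n1 - j) j).1 h)),
        if_neg (by simp only [Finset.mem_range]; omega)]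
  rw [Finset.sum_congr rfl hterm]
  rw [← Finset.sum_subset (Finset.range_subset_range.2 (by omega : n1 + 1 - j ≤ n1 + 1))
    (fun x _ hx => if_neg hx)]
  exact Finset.sum_congr rfl fun x hx => if_pos hx

private lemma triangle_sum (c e : ℤ) (n : ℕ) :
    ∑ j ∈ range (n + 1), ∑ i ∈ range (n + 1 - j), ((i + j).choose j : ℤ) * c ^ i * e ^ j =
      ∑ k ∈ range (n + 1), (c + e) ^ k := by
  induction n with
  | zero => simp
  | succ n ih =>
    have key : ∀ j ∈ range (n + 2),
        (∑ i ∈ range (n + 2 - j), ((i + j).choose j : ℤ) * c ^ i * e ^ j) =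
        (∑ i ∈ range (n + 1 - j), ((i + j).choose j : ℤ) * c ^ i * e ^ j) +
          ((n + 1).choose j : ℤ) * c ^ (n + 1 - j) * e ^ j := by
      intro j hj
      have hj' : j ≤ n + 1 := by simpa [Nat.lt_succ_iff] using hj
      rw [show n + 2 - j = (n + 1 - j) + 1 by omega, Finset.sum_range_succ,
        show n + 1 - j + j = n + 1 by omega]
    rw [Finset.sum_congr rfl key, Finset.sum_add_distrib]
    have h1 : ∑ j ∈ range (n + 2), ∑ i ∈ range (n + 1 - j), ((i + j).choose j : ℤ) * c ^ i * e ^ j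
        = ∑ j ∈ range (n + 1), ∑ i ∈ range (n + 1 - j), ((i + j).choose j : ℤ) * c ^ i * e ^ j := by
      rw [Finset.sum_range_succ]
      simp
    have h2 : ∑ j ∈ range (n + 2), ((n + 1).choose j : ℤ) * c ^ (n + 1 - j) * e ^ j
        = (c + e) ^ (n + 1) := by
      rw [show c + e = e + c by ring, add_pow]
      exact Finset.sum_congr rfl fun j hj => by ring
    rw [h1, h2, ih, Finset.sum_range_succ _ (n + 1)]

end CountPartitionAux

open CountPartitionAux Finset

/-- If `m1 ≤ m2` then the count `c((m1,m2),(d-1,1))`, i.e. the coefficient of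
`t1^(m1-1) t2^(m2-1)` in the generating polynomial, satisfies
`(2d-4) c = (2d-3)^m1 - 1`. -/
theorem count_partition_d_minus_one_one_of_le (d m1 m2 : ℕ) (hd : 3 ≤ d)
    (hm1 : 1 ≤ m1) (h12 : m1 ≤ m2) :
    (2 * (d : ℤ) - 4) *
      MvPolynomial.coeff (Finsupp.equivFunOnFinite.symm ![m1 - 1, m2 - 1])
        ((∑ a ∈ Finset.range m1,
            (C ((d : ℤ) - 2) * X (0 : Fin 2) + X 1) ^ (m1 - 1 - a) * X 0 ^ a) *
          (∑ b ∈ Finset.range m2,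
            (C ((d : ℤ) - 1) * X (0 : Fin 2)) ^ (m2 - 1 - b) * X 1 ^ b)) =
      (2 * (d : ℤ) - 3) ^ m1 - 1 := by
  obtain ⟨n1, rfl⟩ : ∃ n, m1 = n + 1 := ⟨m1 - 1, by omega⟩
  obtain ⟨n2, rfl⟩ : ∃ n, m2 = n + 1 := ⟨m2 - 1, by omega⟩
  have h12' : n1 ≤ n2 := by omega
  simp only [Nat.add_sub_cancel]
  set c : ℤ := (d : ℤ) - 2 with hc
  set e : ℤ := (d : ℤ) - 1 with he
  have hu : (Finsupp.equivFunOnFinite.symm ![n1, n2] : Fin 2 →₀ ℕ) =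
      Finsupp.single 0 n1 + Finsupp.single 1 n2 := by
    ext i; fin_cases i <;> simp [Finsupp.single_apply]
  rw [hu]
  have hBterm : ∀ b, ((C e * X (0 : Fin 2)) ^ (n2 - b) * X 1 ^ b : MvPolynomial (Fin 2) ℤ)
      = monomial (Finsupp.single 0 (n2 - b) + Finsupp.single 1 b) (e ^ (n2 - b)) := by
    intro b
    rw [mul_pow, ← C_pow, CXX_eq_monomial]
  rw [Finset.sum_congr rfl (fun b _ => hBterm b), Finset.mul_sum, coeff_sum]
  set A : MvPolynomial (Fin 2) ℤ :=
    ∑ a ∈ range (n1 + 1), (C c * X 0 + X 1) ^ (n1 - a) * X 0 ^ a with hA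
  have hstep : ∀ b ∈ range (n2 + 1),
      coeff (Finsupp.single (0 : Fin 2) n1 + Finsupp.single 1 n2)
        (A * monomial (Finsupp.single 0 (n2 - b) + Finsupp.single 1 b) (e ^ (n2 - b)))
      = (fun j => if j ≤ n1 then
          coeff (Finsupp.single (0 : Fin 2) (n1 - j) + Finsupp.single 1 j) A * e ^ j else 0)
          (n2 - b) := by
    intro b hb
    have hb' : b ≤ n2 := by simpa [Nat.lt_succ_iff] using hb
    rw [coeff_mul_monomial']
    by_cases hle : n2 - b ≤ n1
    · rw [if_pos ((pair_le_iff _ _ _ _).2 ⟨hle, hb'⟩), pair_sub]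
      simp [hle]
    · rw [if_neg (fun h => hle ((pair_le_iff _ _ _ _).1 h).1)]
      simp [hle]
  rw [Finset.sum_congr rfl hstep]
  have hrefl := Finset.sum_range_reflect
    (fun j => if j ≤ n1 then
      coeff (Finsupp.single (0 : Fin 2) (n1 - j) + Finsupp.single 1 j) A * e ^ j else 0)
    (n2 + 1)
  simp only [Nat.add_sub_cancel] at hrefl
  rw [hrefl]
  rw [← Finset.sum_subset (Finset.range_subset_range.2 (by omega : n1 + 1 ≤ n2 + 1))
    (fun x _ hx => if_neg (by simp only [Finset.mem_range] at hx; omega))]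
  have hdrop : ∀ j ∈ range (n1 + 1),
      (if j ≤ n1 then
        coeff (Finsupp.single (0 : Fin 2) (n1 - j) + Finsupp.single 1 j) A * e ^ j else 0)
      = (∑ i ∈ range (n1 + 1 - j), ((i + j).choose j : ℤ) * c ^ i * e ^ j) := by
    intro j hj
    have hj' : j ≤ n1 := by simpa [Nat.lt_succ_iff] using hj
    rw [if_pos hj', hA, coeff_A c n1 j hj', Finset.sum_mul]
    have := Finset.sum_range_reflect
      (fun i => ((i + j).choose j : ℤ) * c ^ i * e ^ j) (n1 + 1 - j)
    rw [← this]
    refine Finset.sum_congr rfl fun a ha => ?_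
    have ha' : a < n1 + 1 - j := by simpa using ha
    rw [show n1 + 1 - j - 1 - a = n1 - j - a by omega,
      show n1 - j - a + j = n1 - a by omega]
  rw [Finset.sum_congr rfl hdrop, triangle_sum]
  have hce : c + e = 2 * (d : ℤ) - 3 := by rw [hc, he]; ring
  rw [hce]
  have hgeom := geom_sum_mul (2 * (d : ℤ) - 3) (n1 + 1)
  linear_combination hgeom
end

section
/- Let d ≥ 3 and m2 ≥ 1 be integers, set m1 = m2 + 1, and let c denote the coefficient of t1^{m1−1} t2^{m2−1} in the polynomial P = (Σ_{a=0}^{m1−1} ((d−2)·t1 + t2)^{m1−1−a} · t1^a) · (Σ_{b=0}^{m2−1} ((d−1)·t1)^{m2−1−b} · t2^b) in ℤ[t1, t2]. Then (2d−4) · c = (2d−3)^{m1} − 1 − (2d−4) · (d−1)^{m1−1}. -/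
open MvPolynomial
open Finset

lemma sum_identity (m : ℕ) (x : ℤ) :
    ∑ a ∈ range (m + 1), ∑ b ∈ range m,
        (if a ≤ b + 1 then ((m - a).choose (b + 1 - a) : ℤ) * x ^ (b + 1 - a) * (x + 1) ^ (m - 1 - b) else 0)
      = ∑ n ∈ range (m + 1), (2 * x + 1) ^ n - (x + 1) ^ m := by
  rw [Finset.sum_comm]
  -- truncate the inner if-sum
  have step2 : ∀ b ∈ range m,
      ∑ a ∈ range (m + 1), (if a ≤ b + 1 then ((m - a).choose (b + 1 - a) : ℤ) * x ^ (b + 1 - a) * (x + 1) ^ (m - 1 - b) else 0)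
      = ∑ a ∈ range (b + 2), ((m - a).choose (b + 1 - a) : ℤ) * x ^ (b + 1 - a) * (x + 1) ^ (m - 1 - b) := by
    intro b hb
    rw [mem_range] at hb
    rw [← Finset.sum_subset (Finset.range_subset_range.mpr (by omega : b + 2 ≤ m + 1))
        (fun a _ ha => if_neg (by simp at ha ⊢; omega))]
    exact Finset.sum_congr rfl fun a ha => if_pos (by simp at ha; omega)
  rw [Finset.sum_congr rfl step2]
  -- reflect outer sum: b = m-1-k
  rw [← Finset.sum_range_reflect]
  -- rewrite each term
  have step4 : ∀ k ∈ range m,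
      ∑ a ∈ range (m - 1 - k + 2), ((m - a).choose (m - 1 - k + 1 - a) : ℤ) * x ^ (m - 1 - k + 1 - a) * (x + 1) ^ (m - 1 - (m - 1 - k))
      = ∑ j ∈ range (m - k + 1), ((k + j).choose j : ℤ) * x ^ j * (x + 1) ^ k := by
    intro k hk
    rw [mem_range] at hk
    rw [show m - 1 - k + 2 = m - k + 1 by omega, show m - 1 - k + 1 = m - k by omega,
        show m - 1 - (m - 1 - k) = k by omega]
    rw [← Finset.sum_range_reflect]
    refine Finset.sum_congr rfl fun j hj => ?_
    rw [mem_range] at hj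
    rw [show m - k + 1 - 1 - j = m - k - j by omega, show m - (m - k - j) = k + j by omega,
        show m - k - (m - k - j) = j by omega]
  rw [Finset.sum_congr rfl step4]
  -- sigma bijection (k,j) -> (n,k) with n = k+j
  have step7 :
      ∑ k ∈ range m, ∑ j ∈ range (m - k + 1), ((k + j).choose j : ℤ) * x ^ j * (x + 1) ^ k
      = ∑ n ∈ range (m + 1), ∑ k ∈ range (min (n + 1) m), ((n.choose k : ℤ) * x ^ (n - k) * (x + 1) ^ k) := by
    rw [Finset.sum_sigma', Finset.sum_sigma']
    refine Finset.sum_nbij' (fun p => ⟨p.1 + p.2, p.1⟩) (fun p => ⟨p.2, p.1 - p.2⟩) ?_ ?_ ?_ ?_ ?_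
    · rintro ⟨k, j⟩ hp
      simp only [Finset.mem_sigma, mem_range] at hp ⊢
      omega
    · rintro ⟨n, k⟩ hp
      simp only [Finset.mem_sigma, mem_range] at hp ⊢
      omega
    · rintro ⟨k, j⟩ hp
      simp
    · rintro ⟨n, k⟩ hp
      simp only [Finset.mem_sigma, mem_range, Nat.lt_min] at hp
      simp only [Sigma.mk.inj_iff, heq_eq_eq, and_true]
      omega
    · rintro ⟨k, j⟩ hp
      simp only [Finset.mem_sigma, mem_range] at hp
      simp only
      rw [show k + j - k = j by omega,
        show (k + j).choose j = (k + j).choose k from by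
          rw [← Nat.choose_symm (by omega : k ≤ k + j)]; congr 1; omega]
  rw [step7]
  -- final binomial evaluation
  rw [Finset.sum_range_succ]
  have h1 : ∀ n ∈ range m, ∑ k ∈ range (min (n + 1) m), ((n.choose k : ℤ) * x ^ (n - k) * (x + 1) ^ k) = (2 * x + 1) ^ n := by
    intro n hn
    rw [mem_range] at hn
    rw [show min (n+1) m = n + 1 by omega]
    rw [show (2*x+1) = ((x+1) + x) by ring, add_pow]
    exact Finset.sum_congr rfl fun k hk => by ring
  rw [Finset.sum_congr rfl h1]
  have h2 : ∑ k ∈ range (min (m + 1) m), ((m.choose k : ℤ) * x ^ (m - k) * (x + 1) ^ k) = (2*x+1)^m - (x+1)^m := by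
    rw [show min (m+1) m = m by omega]
    have := add_pow (x+1) x m
    rw [Finset.sum_range_succ] at this
    have h3 : ∑ k ∈ range m, ((m.choose k : ℤ) * x ^ (m - k) * (x + 1) ^ k)
        = ∑ k ∈ range m, ((x+1) ^ k * x ^ (m - k) * (m.choose k : ℤ)) :=
      Finset.sum_congr rfl fun k hk => by ring
    rw [h3]
    simp at this
    linear_combination -this
  rw [h2, Finset.sum_range_succ]
  ring
open Finset MvPolynomial

lemma finsupp_cond (i j u v : ℕ) :
    (Finsupp.single (0 : Fin 2) i + Finsupp.single (1 : Fin 2) j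
      = Finsupp.equivFunOnFinite.symm ![u, v]) ↔ (i = u ∧ j = v) := by
  constructor
  · intro h
    have h0 := DFunLike.congr_fun h 0
    have h1 := DFunLike.congr_fun h 1
    simp [Finsupp.single_apply] at h0 h1
    exact ⟨h0, h1⟩
  · rintro ⟨rfl, rfl⟩
    ext z
    fin_cases z <;> simp [Finsupp.single_apply]

lemma coeff_eq (m : ℕ) (c1 c2 : ℤ) :
    MvPolynomial.coeff (Finsupp.equivFunOnFinite.symm ![m, m - 1])
      ((∑ a ∈ range (m + 1), (C c1 * X (0 : Fin 2) + X 1) ^ (m - a) * X 0 ^ a) *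
        (∑ b ∈ range m, (C c2 * X (0 : Fin 2)) ^ (m - 1 - b) * X 1 ^ b))
    = ∑ a ∈ range (m + 1), ∑ b ∈ range m,
        (if a ≤ b + 1 then ((m - a).choose (b + 1 - a) : ℤ) * c1 ^ (b + 1 - a) * c2 ^ (m - 1 - b) else 0) := by
  rw [Finset.sum_mul_sum, coeff_sum]
  refine Finset.sum_congr rfl fun a ha => ?_
  rw [coeff_sum]
  refine Finset.sum_congr rfl fun b hb => ?_
  rw [mem_range] at ha hb
  rw [add_pow, Finset.sum_mul, Finset.sum_mul, coeff_sum]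
  have hterm : ∀ k ∈ range (m - a + 1),
      MvPolynomial.coeff (Finsupp.equivFunOnFinite.symm ![m, m - 1])
        ((C c1 * X (0 : Fin 2)) ^ k * X 1 ^ (m - a - k) * ((m - a).choose k : MvPolynomial (Fin 2) ℤ)
          * X 0 ^ a * ((C c2 * X 0) ^ (m - 1 - b) * X 1 ^ b))
      = if (k + (a + (m - 1 - b)) = m ∧ (m - a - k) + b = m - 1)
          then ((m - a).choose k : ℤ) * c1 ^ k * c2 ^ (m - 1 - b) else 0 := by
    intro k _
    have hC : (C (((m - a).choose k : ℤ) * c1 ^ k * c2 ^ (m - 1 - b)) : MvPolynomial (Fin 2) ℤ)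
        = ((m - a).choose k : MvPolynomial (Fin 2) ℤ) * C c1 ^ k * C c2 ^ (m - 1 - b) := by
      simp [map_mul, map_pow]
    have hre : (C c1 * X (0 : Fin 2)) ^ k * X 1 ^ (m - a - k) * ((m - a).choose k : MvPolynomial (Fin 2) ℤ)
          * X 0 ^ a * ((C c2 * X 0) ^ (m - 1 - b) * X 1 ^ b)
        = C (((m - a).choose k : ℤ) * c1 ^ k * c2 ^ (m - 1 - b))
            * (X 0 ^ (k + (a + (m - 1 - b))) * X 1 ^ ((m - a - k) + b)) := by
      rw [hC]; ring
    rw [hre, X_pow_eq_monomial, X_pow_eq_monomial, monomial_mul, mul_one, C_mul_monomial,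
      mul_one, coeff_monomial]
    simp only [finsupp_cond]
  rw [Finset.sum_congr rfl hterm]
  by_cases hab : a ≤ b + 1
  · rw [Finset.sum_eq_single_of_mem (b + 1 - a) (mem_range.mpr (by omega)),
      if_pos (by omega : (b + 1 - a) + (a + (m - 1 - b)) = m ∧ (m - a - (b + 1 - a)) + b = m - 1),
      if_pos hab]
    intro k hk hne
    exact if_neg (by rw [mem_range] at hk; omega)
  · rw [if_neg hab, Finset.sum_eq_zero]
    intro k hk
    exact if_neg (by rw [mem_range] at hk; omega)


/-- If `m1 = m2 + 1` then the count `c((m1,m2),(d-1,1))`, i.e. the coefficient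
of `t1^(m1-1) t2^(m2-1)` in the generating polynomial, satisfies
`(2d-4) c = (2d-3)^m1 - 1 - (2d-4)(d-1)^(m1-1)`. -/
theorem count_partition_d_minus_one_one_of_succ (d m1 m2 : ℕ) (hd : 3 ≤ d)
    (hm2 : 1 ≤ m2) (hm1 : m1 = m2 + 1) :
    (2 * (d : ℤ) - 4) *
      MvPolynomial.coeff (Finsupp.equivFunOnFinite.symm ![m1 - 1, m2 - 1])
        ((∑ a ∈ Finset.range m1,
            (C ((d : ℤ) - 2) * X (0 : Fin 2) + X 1) ^ (m1 - 1 - a) * X 0 ^ a) *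
          (∑ b ∈ Finset.range m2,
            (C ((d : ℤ) - 1) * X (0 : Fin 2)) ^ (m2 - 1 - b) * X 1 ^ b)) =
      (2 * (d : ℤ) - 3) ^ m1 - 1 - (2 * (d : ℤ) - 4) * ((d : ℤ) - 1) ^ (m1 - 1) := by
  subst hm1
  simp only [Nat.add_sub_cancel]
  rw [coeff_eq m2 ((d : ℤ) - 2) ((d : ℤ) - 1),
    show ((d : ℤ) - 1) = ((d : ℤ) - 2) + 1 by ring, sum_identity]
  simp only [show 2 * ((d : ℤ) - 2) + 1 = 2 * (d : ℤ) - 3 from by ring]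
  have h := geom_sum_mul (2 * (d : ℤ) - 3) (m2 + 1)
  linear_combination h
end

section
/- Let C be a nonempty closed proper subset of Euclidean space ℝ^n and let U ⊆ ℝ^n be a linear subspace not contained in C. Let x ∈ U with x ∉ C, and suppose the restriction to U of the function z ↦ dist(z, C) is differentiable at x (i.e., has a Fréchet derivative within U). Let y* ∈ C be a best approximation of x, i.e., ‖x − y*‖ = dist(x, C). Then the derivative is given by ∂d(x)(u) = ⟨u, x − y*⟩ / dist(x, C) for every u ∈ U; consequently, if z* ∈ C is another best approximation of x, then z* − y* belongs to the orthogonal complement U^⊥. -/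
/-!
Fix a best approximation `y` of `x ∉ C`. The function `z ↦ ‖z - y‖` lies above `dist(·, C)`
everywhere and touches it at `x`, where it is smooth with gradient `(x - y) / ‖x - y‖`.
Their difference therefore has a local maximum at `x` on `U`, and since `U` contains both
`u` and `-u` as tangent directions, the two derivatives agree on `U`. Comparing the resulting
formula for two best approximations `y`, `z` gives `⟪u, z - y⟫ = 0` for all `u ∈ U`.
-/

open Metric

open scoped RealInnerProductSpace

theorem Submodule.mem_posTangentConeAt {E : Type*} [NormedAddCommGroup E] [NormedSpace ℝ E]
    {U : Submodule ℝ E} {x u : E} (hx : x ∈ U) (hu : u ∈ U) :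
    u ∈ posTangentConeAt (U : Set E) x :=
  mem_posTangentConeAt_of_segment_subset (U.convex.segment_subset hx (U.add_mem hx hu))

theorem HasFDerivWithinAt.submodule_apply_eq_of_le_of_eq {E : Type*} [NormedAddCommGroup E]
    [NormedSpace ℝ E] {U : Submodule ℝ E} {f g : E → ℝ} {f' g' : E →L[ℝ] ℝ} {x u : E}
    (hf : HasFDerivWithinAt f f' U x) (hg : HasFDerivWithinAt g g' U x)
    (hle : ∀ z ∈ U, f z ≤ g z) (heq : f x = g x) (hx : x ∈ U) (hu : u ∈ U) :
    f' u = g' u := by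
  have hmax : IsLocalMaxOn (f - g) U x :=
    Filter.eventually_inf_principal.2 (Filter.Eventually.of_forall fun z hz => by
      simp only [Pi.sub_apply, heq, sub_self, sub_nonpos]
      exact hle z hz)
  have := hmax.hasFDerivWithinAt_eq_zero (hf.sub hg) (U.mem_posTangentConeAt hx hu)
    (U.mem_posTangentConeAt hx (U.neg_mem hu))
  simpa [sub_eq_zero] using this

theorem hasFDerivAt_norm_sub {E : Type*} [NormedAddCommGroup E] [InnerProductSpace ℝ E]
    {x y : E} (hxy : x ≠ y) :
    HasFDerivAt (fun z => ‖z - y‖) (‖x - y‖⁻¹ • innerSL ℝ (x - y)) x := by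
  have hpos : 0 < ‖x - y‖ ^ 2 := by positivity [sub_ne_zero.2 hxy]
  have := ((hasFDerivAt_id x).sub_const y).norm_sq.sqrt hpos.ne'
  convert this using 1
  · simp [Real.sqrt_sq (norm_nonneg _)]
  · ext u
    simp only [map_sub, smul_apply, sub_apply, coe_innerSL_apply, smul_eq_mul, id_eq,
      Real.sqrt_sq (norm_nonneg _), ContinuousLinearMap.comp_id, nsmul_eq_mul, Nat.cast_ofNat]
    field_simp

theorem HasFDerivWithinAt.infDist_apply_eq {E : Type*} [NormedAddCommGroup E]
    [InnerProductSpace ℝ E] {C : Set E} {U : Submodule ℝ E} {D : E →L[ℝ] ℝ} {x y u : E}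
    (hD : HasFDerivWithinAt (fun z => infDist z C) D U x) (hxU : x ∈ U) (hyC : y ∈ C)
    (hxy : x ≠ y) (hbest : dist x y = infDist x C) (hu : u ∈ U) :
    D u = ⟪u, x - y⟫ / infDist x C := by
  have htouch := hD.submodule_apply_eq_of_le_of_eq (hasFDerivAt_norm_sub hxy).hasFDerivWithinAt
    (fun z _ => dist_eq_norm z y ▸ infDist_le_dist_of_mem hyC)
    (by rw [← dist_eq_norm, hbest]) hxU hu
  rw [htouch, smul_apply, innerSL_apply_apply, smul_eq_mul, inv_mul_eq_div,
    ← dist_eq_norm, hbest, real_inner_comm]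

theorem deriv_dist_restricted_to_subspace_general
    (n : ℕ) (C : Set (EuclideanSpace ℝ (Fin n)))
    (U : Submodule ℝ (EuclideanSpace ℝ (Fin n)))
    (x : EuclideanSpace ℝ (Fin n)) (hxU : x ∈ U) (hxC : x ∉ C)
    (D : EuclideanSpace ℝ (Fin n) →L[ℝ] ℝ)
    (hD : HasFDerivWithinAt (fun z => Metric.infDist z C) D (U : Set (EuclideanSpace ℝ (Fin n))) x)
    (ystar : EuclideanSpace ℝ (Fin n)) (hyC : ystar ∈ C)
    (hybest : dist x ystar = Metric.infDist x C) :
    (∀ u ∈ U, D u = (inner ℝ u (x - ystar) : ℝ) / Metric.infDist x C) ∧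
      ∀ zstar ∈ C, dist x zstar = Metric.infDist x C → zstar - ystar ∈ Uᗮ := by
  have hne : ∀ {y}, y ∈ C → x ≠ y := fun hy hxy => hxC (hxy ▸ hy)
  refine ⟨fun u hu => hD.infDist_apply_eq hxU hyC (hne hyC) hybest hu, ?_⟩
  intro zstar hzC hzbest
  have hd : infDist x C ≠ 0 := hybest ▸ dist_ne_zero.2 (hne hyC)
  refine (Submodule.mem_orthogonal _ _).2 fun u hu => ?_
  have hsame : ⟪u, x - ystar⟫ = ⟪u, x - zstar⟫ := (div_left_inj' hd).1 <|
    (hD.infDist_apply_eq hxU hyC (hne hyC) hybest hu).symm.trans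
      (hD.infDist_apply_eq hxU hzC (hne hzC) hzbest hu)
  rw [show zstar - ystar = (x - ystar) - (x - zstar) by abel, inner_sub_right, hsame, sub_self]

/-- If the restriction to a subspace `U` of the distance function to a closed
set `C` is differentiable (within `U`) at `x ∈ U \ C`, then its derivative is
`u ↦ ⟨u, x - y*⟩ / dist(x, C)` for any best approximation `y*` of `x`;
consequently any two best approximations of `x` differ by a vector in `Uᗮ`. -/
theorem deriv_dist_restricted_to_subspace
    (n : ℕ) (C : Set (EuclideanSpace ℝ (Fin n))) (hne : C.Nonempty)
    (hcl : IsClosed C) (hproper : C ≠ Set.univ)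
    (U : Submodule ℝ (EuclideanSpace ℝ (Fin n))) (hU : ¬ (U : Set (EuclideanSpace ℝ (Fin n))) ⊆ C)
    (x : EuclideanSpace ℝ (Fin n)) (hxU : x ∈ U) (hxC : x ∉ C)
    (D : EuclideanSpace ℝ (Fin n) →L[ℝ] ℝ)
    (hD : HasFDerivWithinAt (fun z => Metric.infDist z C) D (U : Set (EuclideanSpace ℝ (Fin n))) x)
    (ystar : EuclideanSpace ℝ (Fin n)) (hyC : ystar ∈ C)
    (hybest : dist x ystar = Metric.infDist x C) :
    (∀ u ∈ U, D u = (inner ℝ u (x - ystar) : ℝ) / Metric.infDist x C) ∧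
      ∀ zstar ∈ C, dist x zstar = Metric.infDist x C → zstar - ystar ∈ Uᗮ :=
  deriv_dist_restricted_to_subspace_general n C U x hxU hxC D hD ystar hyC hybest
end

section
/- Let C be a nonempty closed proper subset of Euclidean space ℝ^n. Let x ∈ ℝ^n with x ∉ C, and suppose the function z ↦ dist(z, C) is (Fréchet) differentiable at x. Then x has a unique best approximation y(x) ∈ C, and the derivative satisfies ∂dist(·, C)(x)(u) = ⟨u, x − y(x)⟩ / dist(x, C) for every u ∈ ℝ^n. -/
/-!
Along the segment from `x` to a best approximation `y`, the distance to `C` decreases at unit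
speed, so the derivative `D` of `dist(·, C)` at `x` satisfies `D (x - y) = ‖x - y‖`. Since
`dist(·, C)` is `1`-Lipschitz, `‖D‖ ≤ 1`, and the equality case of Cauchy–Schwarz forces `D` to be
`⟪·, x - y⟫ / ‖x - y‖`. This determines `x - y`, hence `y`.
-/

open Metric
open scoped RealInnerProductSpace

section NormedSpace

variable {E : Type*} [NormedAddCommGroup E] [NormedSpace ℝ E] {C : Set E} {x y : E}

theorem infDist_add_smul_sub_of_dist_eq_infDist (hy : y ∈ C) (hxy : dist x y = infDist x C)
    {t : ℝ} (ht : t ∈ Set.Icc (0 : ℝ) 1) :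
    infDist (x + t • (y - x)) C = (1 - t) * infDist x C := by
  have hnorm : ‖x - y‖ = infDist x C := by rw [← dist_eq_norm, hxy]
  apply le_antisymm
  · calc infDist (x + t • (y - x)) C ≤ ‖x + t • (y - x) - y‖ := by
          rw [← dist_eq_norm]; exact infDist_le_dist_of_mem hy
      _ = ‖(1 - t) • (x - y)‖ := by congr 1; module
      _ = (1 - t) * infDist x C := by
          rw [norm_smul, hnorm, Real.norm_of_nonneg (sub_nonneg.2 ht.2)]
  · have h := infDist_le_infDist_add_dist (s := C) (x := x) (y := x + t • (y - x))
    have hdist : dist x (x + t • (y - x)) = t * infDist x C := by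
      rw [dist_eq_norm, show x - (x + t • (y - x)) = t • (x - y) by module, norm_smul, hnorm,
        Real.norm_of_nonneg ht.1]
    linarith

theorem HasFDerivAt.infDist_apply_sub_eq {D : E →L[ℝ] ℝ}
    (hD : HasFDerivAt (fun z => infDist z C) D x) (hy : y ∈ C) (hxy : dist x y = infDist x C) :
    D (x - y) = infDist x C := by
  have hline : HasDerivAt (fun t : ℝ => x + t • (y - x)) (y - x) 0 := by
    simpa using ((hasDerivAt_id (0 : ℝ)).smul_const (y - x)).const_add x
  have hcomp : HasDerivWithinAt (fun t : ℝ => infDist (x + t • (y - x)) C) (D (y - x))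
      (Set.Icc 0 1) 0 :=
    (hD.comp_hasDerivAt_of_eq 0 hline (by simp)).hasDerivWithinAt
  have hsegment : HasDerivWithinAt (fun t : ℝ => infDist (x + t • (y - x)) C) (-infDist x C)
      (Set.Icc 0 1) 0 := by
    have hlin : HasDerivWithinAt (fun t : ℝ => (1 - t) * infDist x C) (-infDist x C)
        (Set.Icc 0 1) 0 := by
      simpa using ((hasDerivAt_id (0 : ℝ)).const_sub 1).mul_const (infDist x C)
        |>.hasDerivWithinAt
    exact hlin.congr (fun t ht => infDist_add_smul_sub_of_dist_eq_infDist hy hxy ht)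
      (infDist_add_smul_sub_of_dist_eq_infDist hy hxy ⟨le_rfl, zero_le_one⟩)
  have huniq := uniqueDiffOn_Icc zero_lt_one 0 ⟨le_rfl, zero_le_one⟩
  have hneg : D (y - x) = -infDist x C := huniq.eq_deriv _ hcomp hsegment
  rw [← neg_sub, map_neg, hneg, neg_neg]

end NormedSpace

section InnerProductSpace

variable {E : Type*} [NormedAddCommGroup E] [InnerProductSpace ℝ E] [CompleteSpace E]

theorem ContinuousLinearMap.norm_mul_apply_eq_inner_of_norm_le_one {D : E →L[ℝ] ℝ}
    (hD : ‖D‖ ≤ 1) {v : E} (hv : D v = ‖v‖) (u : E) : ‖v‖ * D u = ⟪u, v⟫ := by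
  set w := (InnerProductSpace.toDual ℝ E).symm D
  have hw : ∀ z, inner ℝ w z = D z := fun _ => InnerProductSpace.toDual_symm_apply
  have hwnorm : ‖w‖ ≤ 1 := by rwa [LinearIsometryEquiv.norm_map]
  have hwv : inner ℝ w v = ‖w‖ * ‖v‖ := by
    have hcs := real_inner_le_norm w v
    rw [hw, hv] at hcs ⊢
    nlinarith [norm_nonneg v]
  have hparallel : ‖v‖ • w = v := by
    rcases eq_or_ne v 0 with rfl | hv0
    · simp
    have hw1 : ‖w‖ = 1 := by
      rw [hw, hv] at hwv
      exact (mul_eq_right₀ (norm_ne_zero_iff.2 hv0)).1 (by linarith)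
    rw [inner_eq_norm_mul_iff_real.1 hwv, hw1, one_smul]
  rw [← hw, ← real_inner_smul_left, hparallel, real_inner_comm]

variable {C : Set E} {x y : E}

theorem HasFDerivAt.infDist_mul_apply_eq_inner {D : E →L[ℝ] ℝ}
    (hD : HasFDerivAt (fun z => infDist z C) D x) (hy : y ∈ C) (hxy : dist x y = infDist x C)
    (u : E) : infDist x C * D u = ⟪u, x - y⟫ := by
  have hnorm : ‖x - y‖ = infDist x C := by rw [← dist_eq_norm, hxy]
  have hDnorm : ‖D‖ ≤ 1 := by simpa using hD.le_of_lipschitz (lipschitz_infDist_pt C)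
  rw [← hnorm]
  exact D.norm_mul_apply_eq_inner_of_norm_le_one hDnorm
    (by rw [hnorm]; exact hD.infDist_apply_sub_eq hy hxy) u

end InnerProductSpace

theorem unique_best_approx_of_differentiable_dist_general
    (n : ℕ) (C : Set (EuclideanSpace ℝ (Fin n))) (hne : C.Nonempty)
    (hcl : IsClosed C)
    (x : EuclideanSpace ℝ (Fin n)) (hxC : x ∉ C)
    (D : EuclideanSpace ℝ (Fin n) →L[ℝ] ℝ)
    (hD : HasFDerivAt (fun z => Metric.infDist z C) D x) :
    (∃! y, y ∈ C ∧ dist x y = Metric.infDist x C) ∧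
      ∀ y ∈ C, dist x y = Metric.infDist x C →
        ∀ u, D u = (inner ℝ u (x - y) : ℝ) / Metric.infDist x C := by
  have hpos : 0 < infDist x C := (hcl.notMem_iff_infDist_pos hne).1 hxC
  obtain ⟨y₀, hy₀, hdist₀⟩ := hcl.exists_infDist_eq_dist hne x
  refine ⟨⟨y₀, ⟨hy₀, hdist₀.symm⟩, fun y ⟨hy, hdist⟩ => ?_⟩, fun y hy hdist u => ?_⟩
  · refine sub_right_injective (b := x) (ext_inner_left ℝ fun u => ?_)
    rw [← hD.infDist_mul_apply_eq_inner hy hdist, ← hD.infDist_mul_apply_eq_inner hy₀ hdist₀.symm]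
  · rw [eq_div_iff hpos.ne', mul_comm, hD.infDist_mul_apply_eq_inner hy hdist]

/-- If the distance function to a closed proper set `C ⊆ ℝⁿ` is differentiable
at `x ∉ C`, then `x` has a unique best approximation `y ∈ C`, and the derivative
is `u ↦ ⟨u, x - y⟩ / dist(x, C)`. -/
theorem unique_best_approx_of_differentiable_dist
    (n : ℕ) (C : Set (EuclideanSpace ℝ (Fin n))) (hne : C.Nonempty)
    (hcl : IsClosed C) (hproper : C ≠ Set.univ)
    (x : EuclideanSpace ℝ (Fin n)) (hxC : x ∉ C)
    (D : EuclideanSpace ℝ (Fin n) →L[ℝ] ℝ)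
    (hD : HasFDerivAt (fun z => Metric.infDist z C) D x) :
    (∃! y, y ∈ C ∧ dist x y = Metric.infDist x C) ∧
      ∀ y ∈ C, dist x y = Metric.infDist x C →
        ∀ u, D u = (inner ℝ u (x - y) : ℝ) / Metric.infDist x C :=
  unique_best_approx_of_differentiable_dist_general n C hne hcl x hxC D hD
end

section
/- Let C be a nonempty closed proper subset of Euclidean space ℝ^n. Then for Lebesgue-almost every x ∈ ℝ^n there exists a unique best approximation of x in C, i.e., a unique y ∈ C with ‖x − y‖ = dist(x, C). -/
open MeasureTheory Metric

private lemma fderiv_nearest (n : ℕ) (C : Set (EuclideanSpace ℝ (Fin n)))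
    (hne : C.Nonempty) {x y : EuclideanSpace ℝ (Fin n)}
    (hd : DifferentiableAt ℝ (fun z => infDist z C) x)
    (hyC : y ∈ C) (hy : dist x y = infDist x C) :
    (fderiv ℝ (fun z => infDist z C) x) (y - x) = -infDist x C := by
  set f : EuclideanSpace ℝ (Fin n) → ℝ := fun z => infDist z C with hf
  set L := fderiv ℝ f x with hLdef
  set d : ℝ := infDist x C with hdd
  have hγ : HasDerivAt (fun t : ℝ => x + t • (y - x)) (y - x) 0 := by
    simpa using ((hasDerivAt_id (0 : ℝ)).smul_const (y - x)).const_add x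
  have hg : HasDerivAt (fun t : ℝ => f (x + t • (y - x))) (L (y - x)) 0 := by
    have hfd : HasFDerivAt f L (x + (0:ℝ) • (y - x)) := by simpa using hd.hasFDerivAt
    exact hfd.comp_hasDerivAt 0 hγ
  -- value of f along the segment
  have hval : ∀ t : ℝ, t ∈ Set.Icc (0 : ℝ) 1 → f (x + t • (y - x)) = (1 - t) * d := by
    rintro t ⟨ht0, ht1⟩
    have hxy : dist x y = ‖x - y‖ := dist_eq_norm x y
    have hle : f (x + t • (y - x)) ≤ (1 - t) * d := by
      have h1 : f (x + t • (y - x)) ≤ dist (x + t • (y - x)) y := infDist_le_dist_of_mem hyC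
      have h2 : dist (x + t • (y - x)) y = (1 - t) * ‖x - y‖ := by
        rw [dist_eq_norm]
        have : x + t • (y - x) - y = (1 - t) • (x - y) := by
          module
        rw [this, norm_smul, Real.norm_eq_abs, abs_of_nonneg (by linarith)]
      rw [h2] at h1
      calc f (x + t • (y - x)) ≤ (1 - t) * ‖x - y‖ := h1
        _ = (1 - t) * d := by rw [← hxy, hy]
    have hge : (1 - t) * d ≤ f (x + t • (y - x)) := by
      by_contra hlt
      push_neg at hlt
      obtain ⟨z, hz, hzd⟩ := (infDist_lt_iff hne).mp hlt
      have h1 : d ≤ dist x z := infDist_le_dist_of_mem hz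
      have h2 : dist x (x + t • (y - x)) = t * d := by
        rw [dist_eq_norm]
        have : x - (x + t • (y - x)) = t • (x - y) := by module
        rw [this, norm_smul, Real.norm_eq_abs, abs_of_nonneg ht0, ← hxy, hy]
      have h3 : dist x z ≤ dist x (x + t • (y - x)) + dist (x + t • (y - x)) z :=
        dist_triangle _ _ _
      rw [h2] at h3
      have hd0 : 0 ≤ d := infDist_nonneg
      linarith
    linarith
  -- slope along the segment is constant -d on (0,1]
  have hslope : Filter.Tendsto (slope (fun t : ℝ => f (x + t • (y - x))) 0)
      (nhdsWithin 0 (Set.Ioi 0)) (nhds (-d)) := by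
    apply Filter.Tendsto.congr' _ tendsto_const_nhds
    filter_upwards [Ioo_mem_nhdsGT_of_mem (Set.mem_Ico.mpr ⟨le_refl (0:ℝ), one_pos⟩)]
      with t ht
    rcases ht with ⟨ht0, ht1⟩
    have h0 : f (x + (0:ℝ) • (y - x)) = (1 - 0) * d := hval 0 ⟨le_refl _, zero_le_one⟩
    have hT : f (x + t • (y - x)) = (1 - t) * d := hval t ⟨ht0.le, ht1.le⟩
    rw [slope_def_field]
    simp only [hT]
    rw [show f (x + (0:ℝ) • (y - x)) = d by simpa using h0]
    field_simp
    ring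
  have hslope' : Filter.Tendsto (slope (fun t : ℝ => f (x + t • (y - x))) 0)
      (nhdsWithin 0 (Set.Ioi 0)) (nhds (L (y - x))) := by
    have := hasDerivAt_iff_tendsto_slope.mp hg
    exact this.mono_left (nhdsWithin_mono 0 (fun t ht => ne_of_gt ht))
  exact (tendsto_nhds_unique hslope' hslope)

/-- For a nonempty closed proper subset `C` of Euclidean space, Lebesgue-almost
every point has a unique best approximation in `C`. -/
theorem ae_unique_best_approx
    (n : ℕ) (C : Set (EuclideanSpace ℝ (Fin n))) (hne : C.Nonempty)
    (hcl : IsClosed C) (hproper : C ≠ Set.univ) :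
    ∀ᵐ x ∂(volume : Measure (EuclideanSpace ℝ (Fin n))),
      ∃! y, y ∈ C ∧ dist x y = Metric.infDist x C := by
  have hlip : LipschitzWith 1 (fun z : EuclideanSpace ℝ (Fin n) => infDist z C) :=
    lipschitz_infDist_pt C
  filter_upwards [hlip.ae_differentiableAt] with x hd
  obtain ⟨y, hyC, hy⟩ := hcl.exists_infDist_eq_dist hne x
  refine ⟨y, ⟨hyC, hy.symm⟩, ?_⟩
  rintro z ⟨hzC, hz⟩
  set d : ℝ := infDist x C with hdd
  rcases eq_or_lt_of_le (infDist_nonneg (x := x) (s := C)) with h0 | h0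
  · -- d = 0 : both points equal x
    have hz0 : dist x z = 0 := by rw [hz]; exact h0.symm
    have hy0 : dist x y = 0 := by rw [← hy]; exact h0.symm
    rw [dist_eq_zero] at hz0 hy0
    rw [← hz0, ← hy0]
  · -- d > 0
    set L := fderiv ℝ (fun z : EuclideanSpace ℝ (Fin n) => infDist z C) x with hL
    have hLy : L (y - x) = -d := fderiv_nearest n C hne hd hyC hy.symm
    have hLz : L (z - x) = -d := fderiv_nearest n C hne hd hzC hz
    have hLnorm : ‖L‖ ≤ 1 := by
      have := norm_fderiv_le_of_lipschitz ℝ hlip (x₀ := x)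
      simpa using this
    have hny : ‖z - x‖ = d := by
      rw [show ‖z - x‖ = dist x z from by rw [dist_eq_norm, norm_sub_rev], hz]
    have hnz : ‖y - x‖ = d := by
      rw [show ‖y - x‖ = dist x y from by rw [dist_eq_norm, norm_sub_rev], ← hy]
    have hsum : ‖(z - x) + (y - x)‖ = ‖z - x‖ + ‖y - x‖ := by
      have h1 : ‖(z - x) + (y - x)‖ ≤ 2 * d := by
        calc ‖(z - x) + (y - x)‖ ≤ ‖z - x‖ + ‖y - x‖ := norm_add_le _ _
          _ = 2 * d := by rw [hny, hnz]; ring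
      have h2 : (2 : ℝ) * d ≤ ‖(z - x) + (y - x)‖ := by
        have hLsum : L ((z - x) + (y - x)) = -(2 * d) := by
          rw [map_add, hLy, hLz]; ring
        have := L.le_opNorm ((z - x) + (y - x))
        rw [hLsum] at this
        have habs : (2 : ℝ) * d ≤ ‖L‖ * ‖(z - x) + (y - x)‖ := by
          calc (2 : ℝ) * d = ‖(-(2 * d) : ℝ)‖ := by
                rw [norm_neg, Real.norm_eq_abs, abs_of_nonneg (by linarith)]
            _ ≤ ‖L‖ * ‖(z - x) + (y - x)‖ := this
        calc (2 : ℝ) * d ≤ ‖L‖ * ‖(z - x) + (y - x)‖ := habs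
          _ ≤ 1 * ‖(z - x) + (y - x)‖ := by
              apply mul_le_mul_of_nonneg_right hLnorm (norm_nonneg _)
          _ = ‖(z - x) + (y - x)‖ := one_mul _
      rw [hny, hnz]
      linarith
    have : z - x = y - x :=
      eq_of_norm_eq_of_norm_add_eq (by rw [hny, hnz]) hsum
    have := sub_left_injective.eq_iff.mp this
    exact this
end

section
/- Let d ≥ 1 and m : Fin d → ℕ with m i ≥ 1, and equip the space of d-mode real tensors T : (Π i : Fin d, Fin (m i)) → ℝ with the Hilbert–Schmidt norm and Lebesgue measure. Let C(m) be the set of all rank-one tensors ⊗_i x_i together with the zero tensor, i.e., C(m) = { S : ∃ x with x i ∈ ℝ^{m i}, S(idx) = ∏_i (x i)(idx i) for all idx }. Then for Lebesgue-almost every tensor T there exists a unique S ∈ C(m) with ‖T − S‖ = dist(T, C(m)); that is, almost every real d-mode tensor has a unique best rank one approximation. -/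
open MeasureTheory

/-- The set of rank one tensors (including zero) in the space of `d`-mode real
tensors with the Hilbert–Schmidt norm. -/
def rankOneSet {d : ℕ} (m : Fin d → ℕ) :
    Set (EuclideanSpace ℝ (∀ i, Fin (m i))) :=
  {S | ∃ x : ∀ i, Fin (m i) → ℝ, ∀ idx, S idx = ∏ i, x i (idx i)}

/-!
The distance function `f = infDist · C` to a nonempty set `C` is 1-Lipschitz, so by Rademacher's
theorem it is differentiable almost everywhere. Along the segment from `T` to a nearest point `S`
it decreases with slope `-1`, so `f'(T) (S - T) = -‖S - T‖`. As `‖f'(T)‖ ≤ 1`, two nearest points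
`S₁, S₂` satisfy `‖(S₁ - T) + (S₂ - T)‖ = ‖S₁ - T‖ + ‖S₂ - T‖`, and strict convexity of the
Hilbert–Schmidt norm forces `S₁ = S₂`. Nearest points exist because the rank-one set is closed:
normalising the factors of a rank-one tensor of norm at most `R` bounds them by `max R 1`.
-/

open Metric

section NearestPoint

variable {E : Type*} [NormedAddCommGroup E] [NormedSpace ℝ E] {C : Set E} {x y : E}

lemma infDist_lineMap_of_dist_eq_infDist (hy : y ∈ C) (h : dist x y = infDist x C)
    {t : ℝ} (ht : t ∈ Set.Icc (0 : ℝ) 1) :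
    infDist (AffineMap.lineMap x y t) C = (1 - t) * infDist x C := by
  have h1t : ‖1 - t‖ = 1 - t := Real.norm_of_nonneg (by linarith [ht.2])
  have ht' : ‖t‖ = t := Real.norm_of_nonneg ht.1
  apply le_antisymm
  · calc infDist (AffineMap.lineMap x y t) C ≤ dist (AffineMap.lineMap x y t) y :=
          infDist_le_dist_of_mem hy
      _ = (1 - t) * infDist x C := by rw [dist_lineMap_right, h1t, h]
  · have := infDist_le_infDist_add_dist (x := x) (y := AffineMap.lineMap x y t) (s := C)
    rw [dist_left_lineMap, ht', h] at this
    linarith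

lemma fderiv_infDist_sub_of_dist_eq_infDist (hy : y ∈ C) (h : dist x y = infDist x C)
    (hx : DifferentiableAt ℝ (infDist · C) x) :
    fderiv ℝ (infDist · C) x (y - x) = -infDist x C := by
  have hmem : (0 : ℝ) ∈ Set.Icc (0 : ℝ) 1 := ⟨le_rfl, zero_le_one⟩
  have hcomp : HasDerivWithinAt (fun t : ℝ => infDist (AffineMap.lineMap x y t) C)
      (fderiv ℝ (infDist · C) x (y - x)) (Set.Icc 0 1) 0 := by
    have hx' : HasFDerivAt (infDist · C) (fderiv ℝ (infDist · C) x)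
        (AffineMap.lineMap x y (0 : ℝ)) := by simpa using hx.hasFDerivAt
    exact (hx'.comp_hasDerivAt 0 AffineMap.hasDerivAt_lineMap).hasDerivWithinAt
  have hlin : HasDerivWithinAt (fun t : ℝ => infDist (AffineMap.lineMap x y t) C)
      (-infDist x C) (Set.Icc 0 1) 0 := by
    have : HasDerivAt (fun t : ℝ => (1 - t) * infDist x C) (-infDist x C) 0 := by
      simpa using ((hasDerivAt_id (0 : ℝ)).const_sub 1).mul_const (infDist x C)
    exact this.hasDerivWithinAt.congr (fun t ht => infDist_lineMap_of_dist_eq_infDist hy h ht)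
      (infDist_lineMap_of_dist_eq_infDist hy h hmem)
  exact (uniqueDiffOn_Icc one_pos 0 hmem).eq_deriv _ hcomp hlin

lemma eq_of_dist_eq_infDist_of_differentiableAt [StrictConvexSpace ℝ E]
    (hx : DifferentiableAt ℝ (infDist · C) x) {y₁ y₂ : E} (h₁ : y₁ ∈ C) (h₂ : y₂ ∈ C)
    (e₁ : dist x y₁ = infDist x C) (e₂ : dist x y₂ = infDist x C) : y₁ = y₂ := by
  set L := fderiv ℝ (infDist · C) x
  have n₁ : ‖y₁ - x‖ = infDist x C := by rw [← dist_eq_norm', e₁]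
  have n₂ : ‖y₂ - x‖ = infDist x C := by rw [← dist_eq_norm', e₂]
  have hL : ‖L‖ ≤ 1 := by
    simpa using hx.hasFDerivAt.le_of_lipschitz (lipschitz_infDist_pt C)
  have hsum : ‖(y₁ - x) + (y₂ - x)‖ = ‖y₁ - x‖ + ‖y₂ - x‖ := by
    refine le_antisymm (norm_add_le _ _) ?_
    calc ‖y₁ - x‖ + ‖y₂ - x‖ = -L ((y₁ - x) + (y₂ - x)) := by
          rw [map_add, fderiv_infDist_sub_of_dist_eq_infDist h₁ e₁ hx,
            fderiv_infDist_sub_of_dist_eq_infDist h₂ e₂ hx, n₁, n₂]; ring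
      _ ≤ ‖L ((y₁ - x) + (y₂ - x))‖ := neg_le_abs _
      _ ≤ ‖L‖ * ‖(y₁ - x) + (y₂ - x)‖ := L.le_opNorm _
      _ ≤ ‖(y₁ - x) + (y₂ - x)‖ := mul_le_of_le_one_left (norm_nonneg _) hL
  simpa using (sameRay_iff_norm_add.mpr hsum).eq_of_norm_eq (n₁.trans n₂.symm)

end NearestPoint

section RankOne

variable {d : ℕ} (m : Fin d → ℕ)

noncomputable def rankOneTensor (x : ∀ i, Fin (m i) → ℝ) : EuclideanSpace ℝ (∀ i, Fin (m i)) :=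
  WithLp.toLp 2 fun idx => ∏ i, x i (idx i)

lemma rankOneSet_eq_range : rankOneSet m = Set.range (rankOneTensor m) := by
  ext S
  exact ⟨fun ⟨x, hx⟩ => ⟨x, WithLp.ofLp_injective 2 (funext hx).symm⟩,
    fun ⟨x, hx⟩ => ⟨x, fun idx => hx ▸ rfl⟩⟩

lemma continuous_rankOneTensor : Continuous (rankOneTensor m) :=
  (PiLp.continuous_toLp 2 _).comp <| continuous_pi fun idx =>
    continuous_finsetProd _ fun i _ => (continuous_apply (idx i)).comp (continuous_apply i)

lemma norm_rankOneTensor (x : ∀ i, Fin (m i) → ℝ) :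
    ‖rankOneTensor m x‖ = ∏ i, ‖WithLp.toLp 2 (x i)‖ := by
  have hsq : ‖rankOneTensor m x‖ ^ 2 = (∏ i, ‖WithLp.toLp 2 (x i)‖) ^ 2 := by
    simp only [EuclideanSpace.norm_sq_eq, ← Finset.prod_pow, Real.norm_eq_abs, sq_abs,
      Finset.prod_univ_sum, Fintype.piFinset_univ, rankOneTensor]
  exact (pow_left_inj₀ (norm_nonneg _) (by positivity) two_ne_zero).mp hsq

lemma rankOneTensor_smul (c : Fin d → ℝ) (x : ∀ i, Fin (m i) → ℝ) :
    rankOneTensor m (fun i => c i • x i) = (∏ i, c i) • rankOneTensor m x := by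
  ext idx
  simp [rankOneTensor, Finset.prod_mul_distrib]

variable {m}

lemma exists_norm_le_rankOneTensor_eq_of_mem {S : EuclideanSpace ℝ (∀ i, Fin (m i))}
    (hS : S ∈ rankOneSet m) :
    ∃ x, (∀ i, ‖x i‖ ≤ max ‖S‖ 1) ∧ rankOneTensor m x = S := by
  obtain ⟨x, rfl⟩ := rankOneSet_eq_range m ▸ hS
  rcases d with _ | d
  · exact ⟨x, fun i => i.elim0, rfl⟩
  set ν := fun i => ‖WithLp.toLp 2 (x i)‖
  have hnorm : ‖rankOneTensor m x‖ = ∏ i, ν i := norm_rankOneTensor m x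
  by_cases hν : ∃ i, ν i = 0
  · refine ⟨0, fun i => by simp, ?_⟩
    have h0 : rankOneTensor m x = 0 :=
      norm_eq_zero.mp (hnorm ▸ Finset.prod_eq_zero_iff.mpr (by simpa using hν))
    rw [h0, ← norm_eq_zero, norm_rankOneTensor]
    exact Finset.prod_eq_zero (Finset.mem_univ 0) (by simp)
  push Not at hν
  have hνpos : ∀ i, 0 < ν i := fun i => (norm_nonneg _).lt_of_ne' (hν i)
  -- normalise every factor, then put the whole norm of the tensor on the first one
  set c : Fin (d + 1) → ℝ := fun i => if i = 0 then ‖rankOneTensor m x‖ else 1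
  refine ⟨fun i => (c i / ν i) • x i, fun i => ?_, ?_⟩
  · have hc : 0 ≤ c i := by simp only [c]; split_ifs <;> positivity
    have hx : ‖x i‖ ≤ ν i := (pi_norm_le_iff_of_nonneg (hνpos i).le).mpr fun j =>
      PiLp.norm_apply_le (WithLp.toLp 2 (x i)) j
    calc ‖(c i / ν i) • x i‖ = c i / ν i * ‖x i‖ := by
          rw [norm_smul, Real.norm_of_nonneg (by positivity)]
      _ ≤ c i := by
          rw [div_mul_comm]
          exact mul_le_of_le_one_left hc ((div_le_one (hνpos i)).mpr hx)
      _ ≤ max ‖rankOneTensor m x‖ 1 := by simp only [c]; split_ifs <;> simp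
  · rw [rankOneTensor_smul, Finset.prod_div_distrib, Finset.prod_ite_eq' Finset.univ 0,
      if_pos (Finset.mem_univ _), ← hnorm, div_self, one_smul]
    exact hnorm ▸ (Finset.prod_pos fun i _ => hνpos i).ne'

lemma isClosed_rankOneSet : IsClosed (rankOneSet m) := by
  refine CompactlyGeneratedSpace.isClosed fun K hK => ?_
  obtain ⟨R, hR⟩ := hK.isBounded.subset_closedBall 0
  set box : Set (∀ i, Fin (m i) → ℝ) := Set.univ.pi fun _ => closedBall 0 (max R 1)
  have hbox : IsCompact box := isCompact_univ_pi fun _ => isCompact_closedBall _ _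
  suffices rankOneSet m ∩ K = rankOneTensor m '' box ∩ K from
    this ▸ ((hbox.image (continuous_rankOneTensor m)).isClosed.inter hK.isClosed)
  refine Set.Subset.antisymm (fun S ⟨hS, hSK⟩ => ⟨?_, hSK⟩) ?_
  · obtain ⟨x, hx, rfl⟩ := exists_norm_le_rankOneTensor_eq_of_mem hS
    have : ‖rankOneTensor m x‖ ≤ R := mem_closedBall_zero_iff.mp (hR hSK)
    exact ⟨x, fun i _ => mem_closedBall_zero_iff.mpr ((hx i).trans (by gcongr)), rfl⟩
  · rw [rankOneSet_eq_range]
    exact Set.inter_subset_inter_left _ (Set.image_subset_range _ _)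

end RankOne

theorem ae_unique_best_rank_one_approx_general
    {d : ℕ} (m : Fin d → ℕ) :
    ∀ᵐ T ∂(volume : Measure (EuclideanSpace ℝ (∀ i, Fin (m i)))),
      ∃! S, S ∈ rankOneSet m ∧ dist T S = Metric.infDist T (rankOneSet m) := by
  have hne : (rankOneSet m).Nonempty := rankOneSet_eq_range m ▸ Set.range_nonempty _
  filter_upwards [(lipschitz_infDist_pt (rankOneSet m)).ae_differentiableAt] with T hT
  obtain ⟨S, hS, hTS⟩ := isClosed_rankOneSet.exists_infDist_eq_dist hne T
  exact ⟨S, ⟨hS, hTS.symm⟩, fun S' ⟨hS', hTS'⟩ =>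
    eq_of_dist_eq_infDist_of_differentiableAt hT hS' hS hTS' hTS.symm⟩

/-- Lebesgue-almost every real `d`-mode tensor has a unique best rank one
approximation in the Hilbert–Schmidt norm. -/
theorem ae_unique_best_rank_one_approx
    {d : ℕ} (hd : 1 ≤ d) (m : Fin d → ℕ) (hm : ∀ i, 1 ≤ m i) :
    ∀ᵐ T ∂(volume : Measure (EuclideanSpace ℝ (∀ i, Fin (m i)))),
      ∃! S, S ∈ rankOneSet m ∧ dist T S = Metric.infDist T (rankOneSet m) :=
  ae_unique_best_rank_one_approx_general m
end

section
/- Let d ≥ 1, p ≥ 1, let g : Fin d → Fin p be a surjective grouping map (encoding a partition ω of d with parts ω_k = |g⁻¹(k)|), and let n : Fin p → ℕ with n k ≥ 1. Let S^ω be the subspace of ω-partially-symmetric tensors, i.e., tensors T : (Π i : Fin d, Fin (n (g i))) → ℝ with T(idx ∘ σ) = T(idx) for every permutation σ of Fin d satisfying g ∘ σ = g and every multi-index idx, and let C' be the set of ω-symmetric rank one tensors, i.e., tensors of the form idx ↦ ε · ∏_{i} (z (g i))(idx i) for ε ∈ {+1, −1} and vectors z k ∈ ℝ^{n k}. Then for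 almost every T ∈ S^ω (with respect to the Haar/Lebesgue measure on the finite-dimensional subspace S^ω) there exists a unique S ∈ C' with ‖T − S‖ = dist(T, C') in the Hilbert–Schmidt norm; that is, almost every ω-partially-symmetric tensor has a unique best ω-symmetric rank one approximation. -/
/-!
The distance function `f = infDist · C` to the closed set `C` of `ω`-symmetric rank one tensors
is `1`-Lipschitz on `S^ω ⊇ C`, hence differentiable almost everywhere by Rademacher's theorem.
If `c` is a nearest point to `x`, then `f` decreases with unit speed along the segment from `x`
to `c`, so `f'(x) (c - x) = -‖c - x‖`. As `‖f'(x)‖ ≤ 1`, two nearest points `c₁, c₂` satisfy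
`‖(c₁ - x) + (c₂ - x)‖ = ‖c₁ - x‖ + ‖c₂ - x‖`, and strict convexity of the Euclidean norm
forces `c₁ = c₂`. The set `C` is closed because it is the cone `[0, ∞) • K` over the compact set
`K` of its elements of norm one.
-/

open MeasureTheory

/-- The space of `d`-mode real tensors with dimensions `n (g i)` in mode `i`,
equipped with the Hilbert–Schmidt (Euclidean) norm. -/
abbrev TensorSpace (d p : ℕ) (g : Fin d → Fin p) (n : Fin p → ℕ) :=
  EuclideanSpace ℝ (∀ i : Fin d, Fin (n (g i)))

/-- The subspace `S^ω` of tensors which are partially symmetric with respect to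
the partition of `[d]` encoded by the grouping map `g`: tensors invariant under
precomposition of indices with every permutation `σ` of `Fin d` with `g ∘ σ = g`. -/
def Somega (d p : ℕ) (g : Fin d → Fin p) (n : Fin p → ℕ) :
    Submodule ℝ (TensorSpace d p g n) where
  carrier := {T | ∀ σ : Equiv.Perm (Fin d), ∀ hσ : ∀ j, g (σ j) = g j,
    ∀ idx : ∀ i : Fin d, Fin (n (g i)),
      T (fun j => Fin.cast (congrArg n (hσ j)) (idx (σ j))) = T idx}
  add_mem' := by
    intro a b ha hb σ hσ idx
    show a _ + b _ = a idx + b idx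
    rw [ha σ hσ idx, hb σ hσ idx]
  zero_mem' := by intro σ hσ idx; rfl
  smul_mem' := by
    intro c a ha σ hσ idx
    show c • a _ = c • a idx
    rw [ha σ hσ idx]

/-- The set of `ω`-symmetric rank one tensors `idx ↦ ε ∏ᵢ (z (g i))(idxᵢ)`,
`ε = ±1`. -/
def omegaSymRankOne (d p : ℕ) (g : Fin d → Fin p) (n : Fin p → ℕ) :
    Set (TensorSpace d p g n) :=
  {S | ∃ ε : ℝ, (ε = 1 ∨ ε = -1) ∧ ∃ z : ∀ k, Fin (n k) → ℝ,
    ∀ idx, S idx = ε * ∏ i, z (g i) (idx i)}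

open Metric Set
open scoped Pointwise

section NearestPoint

variable {E : Type*} [NormedAddCommGroup E] [NormedSpace ℝ E] {s : Set E} {x c : E}

theorem infDist_lineMap_of_dist_eq_infDist_s13 (hc : c ∈ s) (hxc : dist x c = infDist x s)
    {t : ℝ} (ht : t ∈ Icc (0 : ℝ) 1) :
    infDist (AffineMap.lineMap x c t) s = (1 - t) * infDist x s := by
  have h_le : infDist (AffineMap.lineMap x c t) s ≤ (1 - t) * dist x c := by
    calc infDist (AffineMap.lineMap x c t) s ≤ dist (AffineMap.lineMap x c t) c :=
          infDist_le_dist_of_mem hc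
      _ = (1 - t) * dist x c := by
          rw [dist_lineMap_right, Real.norm_of_nonneg (sub_nonneg.2 ht.2)]
  have h_ge : infDist x s ≤ infDist (AffineMap.lineMap x c t) s + t * dist x c := by
    calc infDist x s ≤ infDist (AffineMap.lineMap x c t) s + dist x (AffineMap.lineMap x c t) :=
          infDist_le_infDist_add_dist
      _ = infDist (AffineMap.lineMap x c t) s + t * dist x c := by
          rw [dist_left_lineMap, Real.norm_of_nonneg ht.1]
  rw [← hxc] at h_ge ⊢
  linarith

theorem HasFDerivAt.apply_sub_eq_neg_infDist {f' : E →L[ℝ] ℝ}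
    (hf : HasFDerivAt (infDist · s) f' x) (hc : c ∈ s) (hxc : dist x c = infDist x s) :
    f' (c - x) = -infDist x s := by
  have h_line : HasDerivAt (fun t : ℝ => infDist (AffineMap.lineMap x c t) s) (f' (c - x)) 0 :=
    hf.comp_hasDerivAt_of_eq 0 AffineMap.hasDerivAt_lineMap (AffineMap.lineMap_apply_zero x c).symm
  have h_affine : HasDerivWithinAt (fun t : ℝ => infDist (AffineMap.lineMap x c t) s)
      (-infDist x s) (Icc 0 1) 0 := by
    have : HasDerivAt (fun t : ℝ => (1 - t) * infDist x s) (-infDist x s) 0 := by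
      simpa using ((hasDerivAt_id (0 : ℝ)).const_sub 1).mul_const (infDist x s)
    exact this.hasDerivWithinAt.congr_of_mem
      (fun t ht => infDist_lineMap_of_dist_eq_infDist_s13 hc hxc ht) ⟨le_rfl, zero_le_one⟩
  exact (uniqueDiffOn_Icc_zero_one 0 ⟨le_rfl, zero_le_one⟩).eq_deriv _ h_line.hasDerivWithinAt
    h_affine

theorem eq_of_dist_eq_infDist_of_differentiableAt_s13 [StrictConvexSpace ℝ E]
    (hx : DifferentiableAt ℝ (infDist · s) x) {c₁ c₂ : E} (hc₁ : c₁ ∈ s)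
    (hxc₁ : dist x c₁ = infDist x s) (hc₂ : c₂ ∈ s) (hxc₂ : dist x c₂ = infDist x s) :
    c₁ = c₂ := by
  set f' := fderiv ℝ (infDist · s) x
  have hf' : ‖f'‖ ≤ 1 := by
    simpa using norm_fderiv_le_of_lipschitz ℝ (lipschitz_infDist_pt s) (x₀ := x)
  have hnorm₁ : ‖c₁ - x‖ = infDist x s := by rw [← dist_eq_norm, dist_comm, hxc₁]
  have hnorm₂ : ‖c₂ - x‖ = infDist x s := by rw [← dist_eq_norm, dist_comm, hxc₂]
  have h_sum : f' ((c₁ - x) + (c₂ - x)) = -(‖c₁ - x‖ + ‖c₂ - x‖) := by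
    rw [map_add, hx.hasFDerivAt.apply_sub_eq_neg_infDist hc₁ hxc₁,
      hx.hasFDerivAt.apply_sub_eq_neg_infDist hc₂ hxc₂, hnorm₁, hnorm₂]
    ring
  have h_ge : ‖c₁ - x‖ + ‖c₂ - x‖ ≤ ‖(c₁ - x) + (c₂ - x)‖ := by
    calc ‖c₁ - x‖ + ‖c₂ - x‖ = ‖f' ((c₁ - x) + (c₂ - x))‖ := by
          rw [h_sum, norm_neg, Real.norm_of_nonneg (by positivity)]
      _ ≤ ‖f'‖ * ‖(c₁ - x) + (c₂ - x)‖ := f'.le_opNorm _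
      _ ≤ ‖(c₁ - x) + (c₂ - x)‖ := mul_le_of_le_one_left (norm_nonneg _) hf'
  exact sub_left_inj.mp <| eq_of_norm_eq_of_norm_add_eq (hnorm₁.trans hnorm₂.symm)
    (le_antisymm (norm_add_le _ _) h_ge)

theorem ae_existsUnique_dist_eq_infDist [FiniteDimensional ℝ E] [StrictConvexSpace ℝ E]
    [MeasurableSpace E] [BorelSpace E] (μ : Measure E) [μ.IsAddHaarMeasure]
    (hs : IsClosed s) (hne : s.Nonempty) :
    ∀ᵐ x ∂μ, ∃! c, c ∈ s ∧ dist x c = infDist x s := by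
  filter_upwards [(lipschitz_infDist_pt s).ae_differentiableAt (μ := μ)] with x hx
  obtain ⟨c, hc, hxc⟩ := hs.exists_infDist_eq_dist hne x
  exact ⟨c, ⟨hc, hxc.symm⟩, fun c' ⟨hc', hxc'⟩ =>
    eq_of_dist_eq_infDist_of_differentiableAt_s13 hx hc' hxc' hc hxc.symm⟩

end NearestPoint

theorem Isometry.existsUnique_dist_eq_infDist_of_subset_range {α β : Type*}
    [PseudoMetricSpace α] [PseudoMetricSpace β] {f : α → β} (hf : Isometry f) {t : Set β}
    (ht : t ⊆ range f) {x : α} (h : ∃! c, c ∈ f ⁻¹' t ∧ dist x c = infDist x (f ⁻¹' t)) :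
    ∃! c, c ∈ t ∧ dist (f x) c = infDist (f x) t := by
  have h_infDist : infDist (f x) t = infDist x (f ⁻¹' t) := by
    rw [← infDist_image hf, image_preimage_eq_of_subset ht]
  obtain ⟨c, ⟨hc, hxc⟩, huniq⟩ := h
  refine ⟨f c, ⟨hc, by rwa [h_infDist, hf.dist_eq]⟩, ?_⟩
  rintro _ ⟨hc', hxc'⟩
  obtain ⟨c', rfl⟩ := ht hc'
  rw [huniq c' ⟨hc', by rwa [h_infDist, hf.dist_eq] at hxc'⟩]

theorem IsCompact.isClosed_Ici_smul {E : Type*} [NormedAddCommGroup E] [NormedSpace ℝ E]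
    {K : Set E} (hK : IsCompact K) (hK_sphere : K ⊆ sphere 0 1) :
    IsClosed (Ici (0 : ℝ) • K) := by
  have : CompactSpace K := isCompact_iff_compactSpace.mp hK
  have h_eq : Ici (0 : ℝ) • K = Prod.fst '' {q : E × K | q.1 = ‖q.1‖ • (q.2 : E)} := by
    ext x
    simp only [Set.mem_smul, mem_image, mem_ofPred_eq, Prod.exists, Subtype.exists]
    constructor
    · rintro ⟨r, hr, y, hy, rfl⟩
      have hy1 : ‖y‖ = 1 := by simpa using hK_sphere hy
      exact ⟨r • y, y, hy, by rw [norm_smul, hy1, mul_one, Real.norm_of_nonneg hr], rfl⟩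
    · rintro ⟨x, y, hy, hxy, rfl⟩
      exact ⟨‖x‖, norm_nonneg x, y, hy, hxy.symm⟩
  rw [h_eq]
  exact isClosedMap_fst_of_compactSpace _
    (isClosed_eq continuous_fst ((continuous_norm.comp continuous_fst).smul
      (continuous_subtype_val.comp continuous_snd)))

section OmegaSymRankOne

def omegaOuter {d p : ℕ} (g : Fin d → Fin p) {n : Fin p → ℕ}
    (z : ∀ k, EuclideanSpace ℝ (Fin (n k))) : TensorSpace d p g n :=
  WithLp.toLp 2 fun idx => ∏ i, z (g i) (idx i)

def unitOmegaSymRankOne (d p : ℕ) (g : Fin d → Fin p) (n : Fin p → ℕ) :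
    Set (TensorSpace d p g n) :=
  (fun q : ℝ × (∀ k, EuclideanSpace ℝ (Fin (n k))) => q.1 • omegaOuter g q.2) ''
    ({1, -1} ×ˢ univ.pi fun _ => sphere 0 1)

variable {d p : ℕ} (g : Fin d → Fin p) {n : Fin p → ℕ}

@[simp]
theorem omegaOuter_apply (z : ∀ k, EuclideanSpace ℝ (Fin (n k))) (idx : ∀ i, Fin (n (g i))) :
    omegaOuter g z idx = ∏ i, z (g i) (idx i) := rfl

theorem omegaOuter_smul (c : Fin p → ℝ) (z : ∀ k, EuclideanSpace ℝ (Fin (n k))) :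
    omegaOuter g (fun k => c k • z k) = (∏ i, c (g i)) • omegaOuter g z := by
  ext idx
  simp [Finset.prod_mul_distrib]

theorem norm_omegaOuter (z : ∀ k, EuclideanSpace ℝ (Fin (n k))) :
    ‖omegaOuter g z‖ = ∏ i, ‖z (g i)‖ := by
  have h_sq : ‖omegaOuter g z‖ ^ 2 = (∏ i, ‖z (g i)‖) ^ 2 := by
    simp only [EuclideanSpace.norm_sq_eq, omegaOuter_apply, ← Finset.prod_pow, norm_prod]
    exact (Fintype.prod_sum fun i a => ‖z (g i) a‖ ^ 2).symm
  exact (pow_left_inj₀ (norm_nonneg _) (by positivity) two_ne_zero).mp h_sq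

theorem continuous_omegaOuter :
    Continuous (omegaOuter g : (∀ k, EuclideanSpace ℝ (Fin (n k))) → TensorSpace d p g n) :=
  (PiLp.continuous_toLp 2 _).comp <| continuous_pi fun idx => continuous_finsetProd _
    fun i _ => (EuclideanSpace.proj (idx i)).continuous.comp (continuous_apply (g i))

theorem omegaOuter_mem_Somega (z : ∀ k, EuclideanSpace ℝ (Fin (n k))) :
    omegaOuter g z ∈ Somega d p g n := by
  have h_cast : ∀ {k k' : Fin p} (h : k' = k) (a : Fin (n k')),
      z k (Fin.cast (congrArg n h) a) = z k' a := by
    rintro _ _ rfl a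
    rfl
  intro σ hσ idx
  simp only [omegaOuter_apply]
  rw [← Equiv.prod_comp σ fun i => z (g i) (idx i)]
  exact Finset.prod_congr rfl fun i _ => h_cast (hσ i) _

theorem mem_omegaSymRankOne_iff {S : TensorSpace d p g n} :
    S ∈ omegaSymRankOne d p g n ↔
      ∃ ε : ℝ, (ε = 1 ∨ ε = -1) ∧
        ∃ z : ∀ k, EuclideanSpace ℝ (Fin (n k)), S = ε • omegaOuter g z := by
  constructor
  · rintro ⟨ε, hε, z, hS⟩
    exact ⟨ε, hε, fun k => WithLp.toLp 2 (z k), PiLp.ext fun idx => hS idx⟩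
  · rintro ⟨ε, hε, z, rfl⟩
    exact ⟨ε, hε, fun k => z k, fun idx => rfl⟩

theorem omegaSymRankOne_subset_Somega :
    omegaSymRankOne d p g n ⊆ Somega d p g n := by
  intro S hS
  obtain ⟨ε, -, z, rfl⟩ := mem_omegaSymRankOne_iff g |>.mp hS
  exact Submodule.smul_mem _ ε (omegaOuter_mem_Somega g z)

theorem omegaSymRankOne_nonempty : (omegaSymRankOne d p g n).Nonempty :=
  ⟨_, mem_omegaSymRankOne_iff g |>.mpr ⟨1, Or.inl rfl, 0, rfl⟩⟩

theorem isCompact_unitOmegaSymRankOne : IsCompact (unitOmegaSymRankOne d p g n) :=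
  ((Set.toFinite _).isCompact.prod (isCompact_univ_pi fun _ => isCompact_sphere 0 1)).image
    (continuous_fst.smul ((continuous_omegaOuter g).comp continuous_snd))

theorem unitOmegaSymRankOne_subset_sphere : unitOmegaSymRankOne d p g n ⊆ sphere 0 1 := by
  rintro _ ⟨⟨ε, w⟩, ⟨hε, hw⟩, rfl⟩
  have hε1 : ‖ε‖ = 1 := by rcases hε with rfl | rfl <;> simp
  have hw1 : ∀ k, ‖w k‖ = 1 := fun k => by simpa using hw k (mem_univ k)
  simp [norm_smul, hε1, norm_omegaOuter, hw1]

theorem omegaSymRankOne_eq_Ici_smul (hd : 1 ≤ d) (hn : ∀ k, 1 ≤ n k) :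
    omegaSymRankOne d p g n = Ici (0 : ℝ) • unitOmegaSymRankOne d p g n := by
  ext S
  rw [mem_omegaSymRankOne_iff, Set.mem_smul]
  constructor
  · rintro ⟨ε, hε, z, rfl⟩
    have h_polar : ∀ k, ∃ w ∈ sphere (0 : EuclideanSpace ℝ (Fin (n k))) 1, z k = ‖z k‖ • w := by
      intro k
      by_cases hz : z k = 0
      · exact ⟨EuclideanSpace.single ⟨0, hn k⟩ 1, by simp, by simp [hz]⟩
      · exact ⟨‖z k‖⁻¹ • z k, by simp [norm_smul, hz],
          (smul_inv_smul₀ (norm_ne_zero_iff.mpr hz) (z k)).symm⟩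
    choose w hw hzw using h_polar
    refine ⟨∏ i, ‖z (g i)‖, Finset.prod_nonneg fun i _ => norm_nonneg _, ε • omegaOuter g w,
      ⟨(ε, w), ⟨hε, fun k _ => hw k⟩, rfl⟩, ?_⟩
    rw [smul_comm, ← omegaOuter_smul g (fun k => ‖z k‖) w]
    simp only [← hzw]
  · rintro ⟨r, hr, _, ⟨⟨ε, w⟩, ⟨hε, -⟩, rfl⟩, rfl⟩
    refine ⟨ε, hε, fun k => r ^ (d : ℝ)⁻¹ • w k, ?_⟩
    rw [omegaOuter_smul, Finset.prod_const, Finset.card_univ, Fintype.card_fin,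
      Real.rpow_inv_natCast_pow hr (by omega), smul_comm]

theorem isClosed_omegaSymRankOne (hd : 1 ≤ d) (hn : ∀ k, 1 ≤ n k) :
    IsClosed (omegaSymRankOne d p g n) := by
  rw [omegaSymRankOne_eq_Ici_smul g hd hn]
  exact (isCompact_unitOmegaSymRankOne g).isClosed_Ici_smul
    (unitOmegaSymRankOne_subset_sphere g)

end OmegaSymRankOne

theorem ae_unique_best_omega_symmetric_rank_one_approx_general
    (d p : ℕ) (hd : 1 ≤ d) (g : Fin d → Fin p)
    (n : Fin p → ℕ) (hn : ∀ k, 1 ≤ n k)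
    (μ : Measure (Somega d p g n)) [μ.IsAddHaarMeasure] :
    ∀ᵐ (T : Somega d p g n) ∂μ, ∃! S, S ∈ omegaSymRankOne d p g n ∧
      dist (T : TensorSpace d p g n) S =
        Metric.infDist (T : TensorSpace d p g n) (omegaSymRankOne d p g n) := by
  set C := omegaSymRankOne d p g n
  have h_range : C ⊆ range (Subtype.val : Somega d p g n → TensorSpace d p g n) := by
    simpa using omegaSymRankOne_subset_Somega g
  have h_closed : IsClosed (Subtype.val ⁻¹' C : Set (Somega d p g n)) :=
    (isClosed_omegaSymRankOne g hd hn).preimage continuous_subtype_val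
  have h_nonempty : (Subtype.val ⁻¹' C : Set (Somega d p g n)).Nonempty :=
    (omegaSymRankOne_nonempty g).preimage' h_range
  filter_upwards [ae_existsUnique_dist_eq_infDist μ h_closed h_nonempty] with T hT
  exact isometry_subtype_coe.existsUnique_dist_eq_infDist_of_subset_range h_range hT

/-- Almost every `ω`-partially-symmetric tensor (w.r.t. Haar/Lebesgue measure on
the subspace `S^ω`) has a unique best `ω`-symmetric rank one approximation. -/
theorem ae_unique_best_omega_symmetric_rank_one_approx
    (d p : ℕ) (hd : 1 ≤ d) (hp : 1 ≤ p) (g : Fin d → Fin p)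
    (hg : Function.Surjective g) (n : Fin p → ℕ) (hn : ∀ k, 1 ≤ n k)
    (μ : Measure (Somega d p g n)) [μ.IsAddHaarMeasure] :
    ∀ᵐ (T : Somega d p g n) ∂μ, ∃! S, S ∈ omegaSymRankOne d p g n ∧
      dist (T : TensorSpace d p g n) S =
        Metric.infDist (T : TensorSpace d p g n) (omegaSymRankOne d p g n) :=
  ae_unique_best_omega_symmetric_rank_one_approx_general d p hd g n hn μ
end

section
/- Let d ≥ 1, n ≥ 1, and let x, y : Fin d → ℝ^n be tuples of vectors. Assume that for every u ∈ ℝ^n one has ∏_{j ∈ Fin d} ⟨u, x j⟩ = ∏_{j ∈ Fin d} ⟨u, y j⟩. Then there exists a permutation σ of Fin d such that the rank-one tensors agree: for every multi-index idx : Fin d → Fin n, ∏_{j} (y j)(idx j) = ∏_{j} (x (σ j))(idx j); that is, ⊗_{j} y_j = ⊗_{j} x_{σ(j)} as d-mode tensors on (ℝ^n)^{⊗d}. -/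
/-!
Identify `v ∈ ℝⁿ` with the linear form `∑ₖ vₖ Xₖ ∈ ℝ[X₁, …, Xₙ]`. The hypothesis says that the
two products of linear forms agree as functions, hence as polynomials since `ℝ` is infinite. A
nonzero linear form has total degree one, so it is irreducible and hence prime in the unique
factorization domain `ℝ[X₁, …, Xₙ]`. Unique factorization matches each `y j` with `x (σ j)` up
to a scalar `c j`, and comparing the two products forces `∏ⱼ c j = 1`, which is the equality of
the rank-one tensors. If some `x j` vanishes, then so does some `y j`, and both tensors are zero.
-/

open MvPolynomial Finset

theorem exists_perm_associated_of_prod_associated {M : Type*} [CommMonoidWithZero M]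
    [IsCancelMulZero M] :
    ∀ {d : ℕ} {p q : Fin d → M}, (∀ i, Prime (p i)) → (∀ i, Prime (q i)) →
      Associated (∏ i, p i) (∏ i, q i) → ∃ σ : Equiv.Perm (Fin d), ∀ i, Associated (q i) (p (σ i))
  | 0, _, _, _, _, _ => ⟨1, fun i => i.elim0⟩
  | d + 1, p, q, hp, hq, h => by
    obtain ⟨j, -, hj⟩ := (hq 0).exists_mem_finset_dvd
      ((dvd_prod_of_mem q (mem_univ 0)).trans h.symm.dvd)
    have hqj : Associated (q 0) (p j) := (hq 0).associated_of_dvd (hp j) hj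
    have hsplit : ∏ i, p i = p j * ∏ i : Fin d, p (Equiv.swap 0 j i.succ) := by
      rw [← Equiv.prod_comp (Equiv.swap 0 j) p, Fin.prod_univ_succ, Equiv.swap_apply_left]
    rw [hsplit, Fin.prod_univ_succ] at h
    obtain ⟨σ, hσ⟩ := exists_perm_associated_of_prod_associated (fun i => hp _) (fun i => hq _)
      (h.of_mul_left hqj.symm (hp j).ne_zero)
    refine ⟨Equiv.Perm.decomposeFin.symm (j, σ), Fin.cases ?_ fun i => ?_⟩
    · simpa using hqj
    · simpa using hσ i

theorem MvPolynomial.isUnit_of_totalDegree_eq_zero {σ K : Type*} [Field K]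
    {f : MvPolynomial σ K} (hf : f ≠ 0) (hdeg : f.totalDegree = 0) : IsUnit f := by
  refine isUnit_iff_totalDegree_of_isReduced.mpr ⟨Ne.isUnit fun h => hf ?_, hdeg⟩
  rw [totalDegree_eq_zero_iff_eq_C.mp hdeg, h, C_0]

section LinearForm

variable (K ι : Type*) [Fintype ι]

noncomputable def linearForm [CommSemiring K] : (ι → K) →ₗ[K] MvPolynomial ι K :=
  Fintype.linearCombination K X

variable {K ι}

theorem linearForm_apply [CommSemiring K] (v : ι → K) : linearForm K ι v = ∑ i, v i • X i :=
  Fintype.linearCombination_apply ..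

theorem eval_linearForm [CommSemiring K] (v u : ι → K) :
    eval u (linearForm K ι v) = ∑ i, u i * v i := by
  simp [linearForm_apply, mul_comm]

theorem linearForm_injective [CommSemiring K] : Function.Injective (linearForm K ι) :=
  linearIndependent_iff_injective_fintypeLinearCombination.mp (linearIndependent_X ι K)

theorem totalDegree_linearForm_le [CommSemiring K] [Nontrivial K] (v : ι → K) :
    (linearForm K ι v).totalDegree ≤ 1 := by
  rw [linearForm_apply]
  refine (totalDegree_finsetSum _ _).trans (Finset.sup_le fun i _ => ?_)
  exact (totalDegree_smul_le _ _).trans (totalDegree_X i).le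

theorem irreducible_linearForm [Field K] {v : ι → K} (hv : v ≠ 0) :
    Irreducible (linearForm K ι v) := by
  have hne : linearForm K ι v ≠ 0 := (map_ne_zero_iff _ linearForm_injective).mpr hv
  refine ⟨fun hunit => ?_, fun a b hab => ?_⟩
  · obtain ⟨r, -, hr⟩ := isUnit_iff_eq_C_of_isReduced.mp hunit
    have : r = 0 := by simpa [hr] using eval_linearForm v 0
    exact hne (by rw [hr, this, C_0])
  · have ha : a ≠ 0 := by rintro rfl; simp_all
    have hb : b ≠ 0 := by rintro rfl; simp_all
    have hdeg := totalDegree_linearForm_le v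
    rw [hab, totalDegree_mul_of_isDomain ha hb] at hdeg
    by_cases hdeg_a : a.totalDegree = 0
    · exact .inl (isUnit_of_totalDegree_eq_zero ha hdeg_a)
    · exact .inr (isUnit_of_totalDegree_eq_zero hb (by omega))

theorem exists_eq_smul_of_associated_linearForm [Field K] {v w : ι → K}
    (h : Associated (linearForm K ι v) (linearForm K ι w)) : ∃ c : K, w = c • v := by
  obtain ⟨u, hu⟩ := h
  obtain ⟨c, -, hc⟩ := isUnit_iff_eq_C_of_isReduced.mp u.isUnit
  refine ⟨c, linearForm_injective ?_⟩
  rw [← hu, hc, map_smul, mul_comm, C_mul']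

end LinearForm

theorem exists_perm_smul_of_prod_linearForm_eq {K ι : Type*} [Field K] [Fintype ι] {d : ℕ}
    {x y : Fin d → ι → K} (hx : ∀ j, x j ≠ 0)
    (h : ∏ j, linearForm K ι (x j) = ∏ j, linearForm K ι (y j)) :
    ∃ (σ : Equiv.Perm (Fin d)) (c : Fin d → K), ∏ j, c j = 1 ∧ ∀ j, y j = c j • x (σ j) := by
  have hprod : ∏ j, linearForm K ι (x j) ≠ 0 :=
    prod_ne_zero_iff.mpr fun j _ => (map_ne_zero_iff _ linearForm_injective).mpr (hx j)
  have hy : ∀ j, y j ≠ 0 := by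
    intro j hj
    exact hprod (h ▸ prod_eq_zero (mem_univ j) (by rw [hj, map_zero]))
  obtain ⟨σ, hσ⟩ := exists_perm_associated_of_prod_associated
    (fun j => (irreducible_linearForm (hx j)).prime)
    (fun j => (irreducible_linearForm (hy j)).prime) (h ▸ Associated.refl _)
  choose c hc using fun j => exists_eq_smul_of_associated_linearForm (hσ j).symm
  refine ⟨σ, c, smul_left_injective K hprod ?_, hc⟩
  calc (∏ j, c j) • ∏ j, linearForm K ι (x j)
      = ∏ j, c j • linearForm K ι (x (σ j)) := by
        rw [prod_smul, Equiv.prod_comp σ fun j => linearForm K ι (x j)]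
    _ = ∏ j, linearForm K ι (x j) := by simp_rw [← map_smul, ← hc, h]
    _ = (1 : K) • ∏ j, linearForm K ι (x j) := (one_smul K _).symm

theorem rank_one_tensor_eq_up_to_permutation_general
    (d n : ℕ)
    (x y : Fin d → (Fin n → ℝ))
    (h : ∀ u : Fin n → ℝ,
      ∏ j, (∑ k, u k * x j k) = ∏ j, (∑ k, u k * y j k)) :
    ∃ σ : Equiv.Perm (Fin d), ∀ idx : Fin d → Fin n,
      ∏ j, y j (idx j) = ∏ j, x (σ j) (idx j) := by
  have hpoly : ∏ j, linearForm ℝ (Fin n) (x j) = ∏ j, linearForm ℝ (Fin n) (y j) :=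
    MvPolynomial.funext fun u => by simpa only [map_prod, eval_linearForm] using h u
  by_cases hx : ∀ j, x j ≠ 0
  · obtain ⟨σ, c, hc, hyc⟩ := exists_perm_smul_of_prod_linearForm_eq hx hpoly
    refine ⟨σ, fun idx => ?_⟩
    simp_rw [hyc, Pi.smul_apply, smul_eq_mul, prod_mul_distrib, hc, one_mul]
  · push Not at hx
    obtain ⟨j₀, hj₀⟩ := hx
    obtain ⟨j₁, -, hj₁⟩ : ∃ j₁ ∈ univ, linearForm ℝ (Fin n) (y j₁) = 0 :=
      prod_eq_zero_iff.mp (hpoly ▸ prod_eq_zero (mem_univ j₀) (by rw [hj₀, map_zero]))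
    rw [map_eq_zero_iff _ linearForm_injective] at hj₁
    refine ⟨1, fun idx => ?_⟩
    rw [prod_eq_zero (mem_univ j₁) (by rw [hj₁]; rfl), prod_eq_zero (mem_univ j₀) (by simp [hj₀])]

/-- If two tuples of vectors `x, y : Fin d → ℝⁿ` satisfy
`∏ⱼ ⟨u, xⱼ⟩ = ∏ⱼ ⟨u, yⱼ⟩` for every `u ∈ ℝⁿ`, then `⊗ⱼ yⱼ = ⊗ⱼ x_{σ(j)}` for
some permutation `σ` of `Fin d`. -/
theorem rank_one_tensor_eq_up_to_permutation
    (d n : ℕ) (hd : 1 ≤ d) (hn : 1 ≤ n)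
    (x y : Fin d → (Fin n → ℝ))
    (h : ∀ u : Fin n → ℝ,
      ∏ j, (∑ k, u k * x j k) = ∏ j, (∑ k, u k * y j k)) :
    ∃ σ : Equiv.Perm (Fin d), ∀ idx : Fin d → Fin n,
      ∏ j, y j (idx j) = ∏ j, x (σ j) (idx j) :=
  rank_one_tensor_eq_up_to_permutation_general d n x y h
end

section
/- Let F be an infinite field, d ≥ 1, m : Fin d → ℕ and r : Fin d → ℕ with 1 ≤ r i ≤ m i for every i. If (r i)² ≤ ∏_{j ∈ Fin d} r j for every i ∈ Fin d, then there exists a d-mode tensor T : (Π i : Fin d, Fin (m i)) → F such that rank_i T = r i for every i ∈ Fin d. -/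
/-- The `i`-th unfolding of a `d`-mode tensor `T`: the matrix with rows indexed
by `Fin (m i)` and columns indexed by multi-indices over the remaining modes. -/
def modeUnfold {F : Type*} [Field F] {d : ℕ} {m : Fin d → ℕ}
    (T : (∀ i, Fin (m i)) → F) (i : Fin d) :
    Matrix (Fin (m i)) (∀ j : {j : Fin d // j ≠ i}, Fin (m j.1)) F :=
  fun k idx' =>
    T (fun j => if h : j = i then Fin.cast (congrArg m h.symm) k else idx' ⟨j, h⟩)

open Matrix

/-- The 0/1 matrix of an injection, viewed as mapping coordinates. -/
def indMat (F : Type*) [Field F] {α β : Type*} [Fintype α] [DecidableEq β]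
    (f : α → β) : Matrix β α F :=
  Matrix.of fun b a => if f a = b then 1 else 0

lemma transpose_indMat_mul_indMat (F : Type*) [Field F] {α β : Type*}
    [Fintype α] [Fintype β] [DecidableEq α] [DecidableEq β]
    {f : α → β} (hf : Function.Injective f) :
    (indMat F f)ᵀ * indMat F f = 1 := by
  ext a a'
  simp [Matrix.mul_apply, indMat, Matrix.one_apply, ite_mul, Finset.sum_ite_eq,
    hf.eq_iff, eq_comm]

lemma rank_indMat_mul_mul (F : Type*) [Field F] {α β l n : Type*}
    [Fintype α] [Fintype β] [Fintype l] [Fintype n]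
    [DecidableEq α] [DecidableEq β] [DecidableEq l] [DecidableEq n]
    {f : α → l} {g : β → n} (hf : Function.Injective f) (hg : Function.Injective g)
    (B : Matrix α β F) :
    (indMat F f * B * (indMat F g)ᵀ).rank = B.rank := by
  apply le_antisymm
  · exact (Matrix.rank_mul_le_left _ _).trans (Matrix.rank_mul_le_right _ _)
  · have hB : B = (indMat F f)ᵀ * (indMat F f * B * (indMat F g)ᵀ) * indMat F g := by
      calc B = (1 : Matrix α α F) * B * (1 : Matrix β β F) := by
            rw [Matrix.one_mul, Matrix.mul_one]
        _ = ((indMat F f)ᵀ * indMat F f) * B * ((indMat F g)ᵀ * indMat F g) := by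
            rw [transpose_indMat_mul_indMat F hf, transpose_indMat_mul_indMat F hg]
        _ = (indMat F f)ᵀ * (indMat F f * B * (indMat F g)ᵀ) * indMat F g := by
            simp only [Matrix.mul_assoc]
    conv_lhs => rw [hB]
    exact (Matrix.rank_mul_le_left _ _).trans (Matrix.rank_mul_le_right _ _)

/-- Carlini–Kleppe (sufficiency): if `1 ≤ r i ≤ m i` and `(r i)² ≤ ∏ⱼ r j` for
every `i`, then over an infinite field there is a tensor whose `i`-th unfolding
has rank exactly `r i` for every `i`. -/
theorem exists_tensor_with_prescribed_unfolding_ranks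
    (F : Type*) [Field F] [Infinite F] (d : ℕ) (hd : 1 ≤ d)
    (m r : Fin d → ℕ) (hr1 : ∀ i, 1 ≤ r i) (hrm : ∀ i, r i ≤ m i)
    (hsq : ∀ i, r i ^ 2 ≤ ∏ j, r j) :
    ∃ T : (∀ i, Fin (m i)) → F, ∀ i, (modeUnfold T i).rank = r i := by
  classical
  -- index type of the small (r-shaped) tensor
  set ι := ∀ j, Fin (r j) with hι
  -- cardinality bound for the column index types
  have hcard : ∀ i : Fin d,
      r i ≤ Fintype.card (∀ j : {j : Fin d // j ≠ i}, Fin (r j.1)) := by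
    intro i
    have h1 : Fintype.card (∀ j : {j : Fin d // j ≠ i}, Fin (r j.1))
        = ∏ j : {j : Fin d // j ≠ i}, r j.1 := by
      simp [Fintype.card_pi]
    have h2 : (∏ j ∈ Finset.univ.erase i, r j) = ∏ j : {j : Fin d // j ≠ i}, r j.1 := by
      refine Finset.prod_subtype (Finset.univ.erase i) (fun x => ?_) r
      simp [Finset.mem_erase]
    have h3 : r i * ∏ j ∈ Finset.univ.erase i, r j = ∏ j, r j :=
      Finset.mul_prod_erase _ _ (Finset.mem_univ i)
    have h4 : r i * r i ≤ r i * ∏ j ∈ Finset.univ.erase i, r j := by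
      rw [h3]; simpa [pow_two] using hsq i
    have h5 := Nat.le_of_mul_le_mul_left h4 (hr1 i)
    rw [h1, ← h2]; exact h5
  -- choose an injection of rows into columns for each mode
  have hemb : ∀ i : Fin d,
      Nonempty (Fin (r i) ↪ (∀ j : {j : Fin d // j ≠ i}, Fin (r j.1))) := fun i =>
    Function.Embedding.nonempty_of_card_le (by simpa using hcard i)
  let φ : ∀ i : Fin d, Fin (r i) ↪ (∀ j : {j : Fin d // j ≠ i}, Fin (r j.1)) :=
    fun i => (hemb i).some
  -- the multi-index of entry (k, c) in the chosen square submatrix of unfolding i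
  let idx : ∀ i : Fin d, Fin (r i) → Fin (r i) → ι := fun i k c j =>
    if h : j = i then Fin.cast (congrArg r h.symm) k else φ i c ⟨j, h⟩
  -- generic square submatrices, as polynomial matrices
  let M : ∀ i : Fin d, Matrix (Fin (r i)) (Fin (r i)) (MvPolynomial ι F) := fun i =>
    Matrix.of fun k c => MvPolynomial.X (idx i k c)
  have hdet : ∀ i, (M i).det ≠ 0 := by
    intro i h0
    -- evaluate at the indicator of the graph of φ i
    set σ : ι → F := fun v =>
      if φ i (v i) = (fun j : {j : Fin d // j ≠ i} => v j.1) then 1 else 0 with hσ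
    have hone : (M i).map (MvPolynomial.eval σ) = 1 := by
      ext k c
      have hki : idx i k c i = k := by
        simp only [idx, dif_pos rfl]
        ext
        simp
      have hkj : (fun j : {j : Fin d // j ≠ i} => idx i k c j.1) = φ i c := by
        funext j
        simp only [idx, dif_neg j.2]
      simp only [M, Matrix.map_apply, Matrix.of_apply, MvPolynomial.eval_X, σ,
        Matrix.one_apply, hki, hkj]
      simp [(φ i).injective.eq_iff, eq_comm]
    have : MvPolynomial.eval σ (M i).det = 1 := by
      rw [RingHom.map_det, RingHom.mapMatrix_apply, hone, Matrix.det_one]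
    rw [h0] at this
    simp at this
  -- the product of all the minors is a nonzero polynomial
  have hP : (∏ i, (M i).det) ≠ 0 :=
    Finset.prod_ne_zero_iff.mpr fun i _ => hdet i
  -- hence it has a nonvanishing point (F infinite)
  have hx : ∃ x : ι → F, MvPolynomial.eval x (∏ i, (M i).det) ≠ 0 := by
    by_contra h
    push_neg at h
    exact hP (MvPolynomial.funext fun x => by simpa using h x)
  obtain ⟨x, hx⟩ := hx
  -- the small tensor
  let S : (∀ j, Fin (r j)) → F := x
  have hxi : ∀ i, ((M i).map (MvPolynomial.eval x)).det ≠ 0 := by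
    intro i h0
    apply hx
    rw [map_prod]
    refine Finset.prod_eq_zero (Finset.mem_univ i) ?_
    rw [RingHom.map_det, RingHom.mapMatrix_apply]
    exact h0
  have hmapi : ∀ i, (M i).map (MvPolynomial.eval x) = (modeUnfold S i).submatrix id (φ i) := by
    intro i
    ext k c
    simp only [M, Matrix.map_apply, Matrix.of_apply, MvPolynomial.eval_X,
      Matrix.submatrix_apply, id_eq, modeUnfold, S, idx]
  -- ranks of the small tensor's unfoldings
  have hrankS : ∀ i, (modeUnfold S i).rank = r i := by
    intro i
    apply le_antisymm
    · simpa using (modeUnfold S i).rank_le_card_height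
    · have hsub : ((modeUnfold S i).submatrix id (φ i)).rank = r i := by
        rw [Matrix.rank_of_isUnit _ ((Matrix.isUnit_iff_isUnit_det _).mpr
          (isUnit_iff_ne_zero.mpr (by rw [← hmapi i]; exact hxi i)))]
        simp
      have hmul : (modeUnfold S i).submatrix id (φ i)
          = modeUnfold S i * indMat F (φ i) := by
        ext k c
        simp [Matrix.mul_apply, indMat, mul_ite, Finset.sum_ite_eq]
      calc r i = ((modeUnfold S i).submatrix id (φ i)).rank := hsub.symm
      _ ≤ (modeUnfold S i).rank := by
          rw [hmul]; exact Matrix.rank_mul_le_left _ _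
  -- the big tensor: pad with zeros
  set T : (∀ j, Fin (m j)) → F := fun v =>
    if h : ∀ j, (v j : ℕ) < r j then S (fun j => ⟨v j, h j⟩) else 0 with hT
  refine ⟨T, fun i => ?_⟩
  -- column embedding for mode i
  let g : (∀ j : {j : Fin d // j ≠ i}, Fin (r j.1)) → (∀ j : {j : Fin d // j ≠ i}, Fin (m j.1)) :=
    fun c' j => Fin.castLE (hrm j.1) (c' j)
  have hginj : Function.Injective g := by
    intro c' c'' h
    funext j
    exact Fin.castLE_injective _ (congrFun h j)
  have hfinj : Function.Injective (Fin.castLE (hrm i)) := Fin.castLE_injective _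
  have key : modeUnfold T i
      = indMat F (Fin.castLE (hrm i)) * modeUnfold S i * (indMat F g)ᵀ := by
    ext b c
    by_cases hb : (b : ℕ) < r i
    · by_cases hc : ∀ j : {j : Fin d // j ≠ i}, ((c j : ℕ) < r j.1)
      · -- both indices in range
        set a0 : Fin (r i) := ⟨b, hb⟩ with ha0
        set c0 : ∀ j : {j : Fin d // j ≠ i}, Fin (r j.1) := fun j => ⟨c j, hc j⟩ with hc0
        have hfa : ∀ a : Fin (r i), (Fin.castLE (hrm i) a = b) = (a = a0) := by
          intro a
          simp [Fin.ext_iff, a0]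
        have hgc : ∀ c', (g c' = c) = (c' = c0) := by
          intro c'
          simp only [eq_iff_iff]
          constructor
          · intro h
            funext j
            have := congrFun h j
            simp only [g] at this
            simp [c0, Fin.ext_iff, ← this]
          · intro h
            subst h
            funext j
            simp [g, c0, Fin.ext_iff]
        have hR : (indMat F (Fin.castLE (hrm i)) * modeUnfold S i * (indMat F g)ᵀ) b c
            = modeUnfold S i a0 c0 := by
          simp [Matrix.mul_apply, indMat, hfa, hgc, ite_mul, mul_ite,
            Finset.sum_ite_eq', Finset.sum_ite_eq]
        rw [hR]
        -- left side
        have hw : ∀ j, (((fun j => if h : j = i then Fin.cast (congrArg m h.symm) b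
            else c ⟨j, h⟩) : ∀ j, Fin (m j)) j : ℕ) < r j := by
          intro j
          by_cases h : j = i
          · subst h
            simpa using hb
          · simpa [dif_neg h] using hc ⟨j, h⟩
        show T _ = S _
        rw [hT]
        simp only [dif_pos hw]
        congr 1
        funext j
        by_cases h : j = i
        · subst h
          ext
          simp [a0]
        · ext
          simp [dif_neg h, c0]
      · -- a column index out of range: both sides vanish
        obtain ⟨j, hj⟩ := not_forall.mp hc
        push_neg at hj
        have hL : modeUnfold T i b c = 0 := by
          show T _ = 0
          rw [hT]
          refine dif_neg ?_
          intro hall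
          exact absurd (by simpa [j.2] using hall j.1) (not_lt.mpr hj)
        have hR : (indMat F (Fin.castLE (hrm i)) * modeUnfold S i * (indMat F g)ᵀ) b c = 0 := by
          simp only [Matrix.mul_apply, Matrix.transpose_apply, indMat, Matrix.of_apply]
          refine Finset.sum_eq_zero fun c' _ => ?_
          have : ¬ (g c' = c) := by
            intro h
            have := congrFun h j
            simp only [g] at this
            have : ((c' j : ℕ)) = (c j : ℕ) := by rw [← this]; simp
            omega
          rw [if_neg this, mul_zero]
        rw [hL, hR]
    · -- row index out of range: both sides vanish
      have hL : modeUnfold T i b c = 0 := by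
        show T _ = 0
        rw [hT]
        refine dif_neg ?_
        intro hall
        have := hall i
        simp only [dif_pos, Fin.coe_cast] at this
        omega
      have hR : (indMat F (Fin.castLE (hrm i)) * modeUnfold S i * (indMat F g)ᵀ) b c = 0 := by
        simp only [Matrix.mul_apply, Matrix.transpose_apply, indMat, Matrix.of_apply]
        refine Finset.sum_eq_zero fun c' _ => ?_
        have hz : (∑ a, (if Fin.castLE (hrm i) a = b then (1 : F) else 0) * modeUnfold S i a c') = 0 := by
          refine Finset.sum_eq_zero fun a _ => ?_
          have : ¬ (Fin.castLE (hrm i) a = b) := by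
            intro h
            have : ((a : ℕ)) = (b : ℕ) := by rw [← h]; simp
            omega
          rw [if_neg this, zero_mul]
        rw [hz, zero_mul]
      rw [hL, hR]
  rw [key, rank_indMat_mul_mul F hfinj hginj, hrankS i]
end
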